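/- arXiv:1204.4596 — 10 statements merged into one kernel-verified Lean document; each statement's English description precedes it below -/
import Mathlib

section
/- Let n ≥ 3 and z : Fin n → Bool. Then the graph G_z is connected if and only if |z| is odd. -/
/-- Cyclic successor on `Fin n`. -/
def cycSucc {n : ℕ} (i : Fin n) : Fin n := ⟨(i.val + 1) % n, Nat.mod_lt _ i.pos⟩

/-- The graph `G_z` on the `2n` vertices `Fin n × Fin 2`, where `(i, 0)` is the top vertex
`t_i` and `(i, 1)` is the bottom vertex `b_i`.  For each `i`, if `z i = false` there are
edges `{t_i, t_{i+1}}` and `{b_i, b_{i+1}}`, and if `z i = true` there are edges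
`{t_i, b_{i+1}}` and `{b_i, t_{i+1}}` (indices mod `n`). -/
def Gz (n : ℕ) (z : Fin n → Bool) : SimpleGraph (Fin n × Fin 2) :=
  SimpleGraph.fromEdgeSet { e | ∃ i : Fin n,
    if z i then
      e = s((i, 0), (cycSucc i, 1)) ∨ e = s((i, 1), (cycSucc i, 0))
    else
      e = s((i, 0), (cycSucc i, 0)) ∨ e = s((i, 1), (cycSucc i, 1)) }

namespace GzAux

variable {n : ℕ}

/-- step weight at position `k` (0 if `n = 0`). -/
def ec (n : ℕ) (z : Fin n → Bool) (k : ℕ) : ℕ :=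
  if h : 0 < n then (if z ⟨k % n, Nat.mod_lt _ h⟩ then 1 else 0) else 0

def T (n : ℕ) (z : Fin n → Bool) (k : ℕ) : ℕ := ∑ j ∈ Finset.range k, ec n z j

def V (n : ℕ) (z : Fin n → Bool) (hn : 0 < n) (k : ℕ) : Fin n × Fin 2 :=
  (⟨k % n, Nat.mod_lt _ hn⟩, ⟨T n z k % 2, Nat.mod_lt _ (by norm_num)⟩)

lemma T_succ (n : ℕ) (z : Fin n → Bool) (k : ℕ) : T n z (k + 1) = T n z k + ec n z k :=
  Finset.sum_range_succ _ _

lemma ec_period (n : ℕ) (z : Fin n → Bool) (k : ℕ) : ec n z (n + k) = ec n z k := by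
  unfold ec
  split
  · simp [Nat.add_mod_left]
  · rfl

lemma T_period (n : ℕ) (z : Fin n → Bool) (k : ℕ) : T n z (n + k) = T n z n + T n z k := by
  induction k with
  | zero => simp [T]
  | succ k ih => rw [← Nat.add_assoc, T_succ, ih, T_succ, ec_period]; ring

lemma T_n (n : ℕ) (z : Fin n → Bool) (hn : 0 < n) : T n z n = (Finset.univ.filter fun i => z i = true).card := by
  rw [Finset.card_filter, T, ← Fin.sum_univ_eq_sum_range (ec n z) n]
  refine Finset.sum_congr rfl fun i _ => ?_
  unfold ec
  rw [dif_pos hn]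
  have : (⟨i.val % n, Nat.mod_lt _ hn⟩ : Fin n) = i := Fin.ext (Nat.mod_eq_of_lt i.isLt)
  rw [this]

lemma succ_mod_ne (n : ℕ) (hn2 : 2 ≤ n) (k : ℕ) : (k + 1) % n ≠ k % n := by
  have hr : k % n < n := Nat.mod_lt _ (by omega)
  rw [Nat.add_mod]
  have h1 : 1 % n = 1 := Nat.mod_eq_of_lt (by omega)
  rw [h1]
  rcases lt_or_ge (k % n + 1) n with h | h
  · rw [Nat.mod_eq_of_lt h]; omega
  · have : k % n + 1 = n := by omega
    rw [this, Nat.mod_self]; omega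

lemma cycSucc_eq (n : ℕ) (hn : 0 < n) (k : ℕ) :
    cycSucc (⟨k % n, Nat.mod_lt _ hn⟩ : Fin n) = ⟨(k + 1) % n, Nat.mod_lt _ hn⟩ := by
  apply Fin.ext
  show (k % n + 1) % n = (k + 1) % n
  conv_rhs => rw [Nat.add_mod]
  conv_lhs => rw [Nat.add_mod]
  rw [Nat.mod_mod_of_dvd _ dvd_rfl]

lemma adj_V (n : ℕ) (z : Fin n → Bool) (hn2 : 2 ≤ n) (k : ℕ) :
    (Gz n z).Adj (V n z (by omega) k) (V n z (by omega) (k + 1)) := by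
  have hn : 0 < n := by omega
  rw [Gz, SimpleGraph.fromEdgeSet_adj]
  constructor
  · refine ⟨⟨k % n, Nat.mod_lt _ hn⟩, ?_⟩
    have hcs := cycSucc_eq n hn k
    have hT : T n z (k + 1) = T n z k + ec n z k := T_succ n z k
    have hec : ec n z k = if z ⟨k % n, Nat.mod_lt _ hn⟩ then 1 else 0 := by
      rw [ec, dif_pos hn]
    cases hz : z ⟨k % n, Nat.mod_lt _ hn⟩ with
    | false =>
      rw [if_neg (by simp [hz])]
      rw [hz] at hec; simp at hec
      rcases Nat.mod_two_eq_zero_or_one (T n z k) with h2 | h2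
      · left
        simp [V, hcs, Sym2.eq_iff, Prod.ext_iff, Fin.ext_iff]
        omega
      · right
        simp [V, hcs, Sym2.eq_iff, Prod.ext_iff, Fin.ext_iff]
        omega
    | true =>
      rw [if_pos (by simp [hz])]
      rw [hz] at hec; simp at hec
      rcases Nat.mod_two_eq_zero_or_one (T n z k) with h2 | h2
      · left
        simp [V, hcs, Sym2.eq_iff, Prod.ext_iff, Fin.ext_iff]
        omega
      · right
        simp [V, hcs, Sym2.eq_iff, Prod.ext_iff, Fin.ext_iff]
        omega
  · intro h
    have := congrArg (fun p : Fin n × Fin 2 => p.1.val) h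
    exact succ_mod_ne n hn2 k this.symm

lemma reach_V (n : ℕ) (z : Fin n → Bool) (hn2 : 2 ≤ n) (k : ℕ) :
    (Gz n z).Reachable (V n z (by omega) 0) (V n z (by omega) k) := by
  induction k with
  | zero => exact SimpleGraph.Reachable.refl _
  | succ k ih => exact ih.trans (adj_V n z hn2 k).reachable

lemma ec_fin (n : ℕ) (z : Fin n → Bool) (hn : 0 < n) (i : Fin n) :
    ec n z i.val = if z i then 1 else 0 := by
  rw [ec, dif_pos hn]
  have : (⟨i.val % n, Nat.mod_lt _ hn⟩ : Fin n) = i := Fin.ext (Nat.mod_eq_of_lt i.isLt)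
  rw [this]

def col (n : ℕ) (z : Fin n → Bool) (v : Fin n × Fin 2) : ZMod 2 :=
  ((v.2.val + T n z v.1.val : ℕ) : ZMod 2)

lemma T_cycSucc (n : ℕ) (z : Fin n → Bool) (hn : 0 < n)
    (heven : T n z n % 2 = 0) (i : Fin n) :
    ((T n z (cycSucc i).val : ℕ) : ZMod 2) = (T n z i.val : ℕ) + (ec n z i.val : ℕ) := by
  have hTn : ((T n z n : ℕ) : ZMod 2) = 0 :=
    (ZMod.natCast_eq_zero_iff _ 2).mpr (Nat.dvd_of_mod_eq_zero heven)
  show ((T n z ((i.val + 1) % n) : ℕ) : ZMod 2) = _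
  rcases lt_or_ge (i.val + 1) n with h | h
  · rw [Nat.mod_eq_of_lt h, T_succ]
    push_cast
    ring
  · have hin : i.val + 1 = n := by have := i.isLt; omega
    rw [hin, Nat.mod_self]
    have hts := T_succ n z i.val
    rw [hin] at hts
    rw [hts] at hTn
    have h0 : T n z 0 = 0 := rfl
    rw [h0]
    push_cast at hTn ⊢
    linear_combination -hTn

lemma col_adj (n : ℕ) (z : Fin n → Bool) (hn : 0 < n) (heven : T n z n % 2 = 0)
    {a b : Fin n × Fin 2} (hab : (Gz n z).Adj a b) : col n z a = col n z b := by
  rw [Gz, SimpleGraph.fromEdgeSet_adj] at hab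
  obtain ⟨⟨i, hi⟩, _⟩ := hab
  have key : ∀ s t : Fin 2, ((t.val : ZMod 2) = s.val + ec n z i.val) →
      col n z (i, s) = col n z (cycSucc i, t) := by
    intro s t hst
    unfold col
    push_cast
    rw [T_cycSucc n z hn heven i, hst]
    have h2 : (2 : ZMod 2) = 0 := rfl
    linear_combination (-((ec n z i.val : ℕ) : ZMod 2)) * h2
  have hsym : ∀ s t : Fin 2, ((t.val : ZMod 2) = s.val + ec n z i.val) →
      col n z (cycSucc i, t) = col n z (i, s) := fun s t h => (key s t h).symm
  revert hi
  rcases hz : z i with _ | _ <;> simp only [Bool.false_eq_true, if_neg, if_pos, ite_true, ite_false] <;>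
    intro hi <;>
    have he : ec n z i.val = (if z i then 1 else 0) := ec_fin n z hn i <;>
    rw [hz] at he <;> simp at he <;>
    rcases hi with h | h <;> rw [Sym2.eq_iff] at h <;>
    rcases h with ⟨h1, h2⟩ | ⟨h1, h2⟩ <;> subst h1 <;> subst h2 <;>
    first
      | exact key 0 0 (by rw [he]; decide)
      | exact key 1 1 (by rw [he]; decide)
      | exact key 0 1 (by rw [he]; decide)
      | exact key 1 0 (by rw [he]; decide)
      | exact hsym 0 0 (by rw [he]; decide)
      | exact hsym 1 1 (by rw [he]; decide)
      | exact hsym 0 1 (by rw [he]; decide)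
      | exact hsym 1 0 (by rw [he]; decide)

lemma col_reach (n : ℕ) (z : Fin n → Bool) (hn : 0 < n) (heven : T n z n % 2 = 0)
    {a b : Fin n × Fin 2} (h : (Gz n z).Reachable a b) : col n z a = col n z b := by
  obtain ⟨w⟩ := h
  induction w with
  | nil => rfl
  | cons hadj _ ih => exact (col_adj n z hn heven hadj).trans ih

lemma connected_of_odd (n : ℕ) (z : Fin n → Bool) (hn3 : 3 ≤ n)
    (hodd : Odd (Finset.univ.filter fun i => z i = true).card) : (Gz n z).Connected := by
  have hn : 0 < n := by omega
  have hn2 : 2 ≤ n := by omega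
  have hTn : T n z n % 2 = 1 := by rw [T_n n z hn]; exact Nat.odd_iff.mp hodd
  have key : ∀ v : Fin n × Fin 2, (Gz n z).Reachable (V n z hn 0) v := by
    rintro ⟨i, s⟩
    have hs2 : s.val < 2 := s.isLt
    by_cases hcase : s.val = T n z i.val % 2
    · have hv : V n z hn i.val = (i, s) := by
        unfold V
        refine Prod.ext (Fin.ext ?_) (Fin.ext ?_)
        · exact Nat.mod_eq_of_lt i.isLt
        · exact hcase.symm
      rw [← hv]
      exact reach_V n z hn2 i.val
    · have hv : V n z hn (n + i.val) = (i, s) := by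
        unfold V
        refine Prod.ext (Fin.ext ?_) (Fin.ext ?_)
        · show (n + i.val) % n = i.val
          rw [Nat.add_mod_left]
          exact Nat.mod_eq_of_lt i.isLt
        · show T n z (n + i.val) % 2 = s.val
          rw [T_period]
          omega
      rw [← hv]
      exact reach_V n z hn2 (n + i.val)
  haveI : Nonempty (Fin n × Fin 2) := ⟨(⟨0, hn⟩, 0)⟩
  exact ⟨fun a b => (key a).symm.trans (key b)⟩

end GzAux

theorem Gz_connected_iff_odd (n : ℕ) (hn : 3 ≤ n) (z : Fin n → Bool) :
    (Gz n z).Connected ↔ Odd (Finset.univ.filter fun i => z i = true).card := by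
  have hn0 : 0 < n := by omega
  constructor
  · intro hconn
    by_contra hodd
    have heven : GzAux.T n z n % 2 = 0 := by
      rw [GzAux.T_n n z hn0]
      rw [Nat.odd_iff] at hodd
      omega
    have hreach := hconn.preconnected (⟨0, hn0⟩, 0) (⟨0, hn0⟩, 1)
    have := GzAux.col_reach n z hn0 heven hreach
    unfold GzAux.col at this
    simp [GzAux.T] at this
  · exact GzAux.connected_of_odd n z hn
end

section
/- Let n ≥ 3 and z : Fin n → Bool. If |z| is odd, then G_z is isomorphic (as a simple graph) to the cycle graph on 2n vertices. -/
/-- The cycle graph on `m` vertices: `v` and `w` are adjacent iff they differ by `±1` mod `m`. -/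
def cycleGraph (m : ℕ) : SimpleGraph (Fin m) :=
  SimpleGraph.fromRel fun v w => cycSucc v = w

namespace GzAux

def b2f : Bool → Fin 2 := fun b => if b then 1 else 0

lemma b2f_inj : Function.Injective b2f := by decide

lemma b2f_xor (a b : Bool) : b2f (xor a b) = b2f a + b2f b := by
  cases a <;> cases b <;> rfl

variable {n : ℕ}

def P (z : Fin n → Bool) (hn : 0 < n) : ℕ → Bool
  | 0 => false
  | (k+1) => xor (P z hn k) (z ⟨k % n, Nat.mod_lt _ hn⟩)

lemma P_add (z : Fin n → Bool) (hn : 0 < n) (k : ℕ) :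
    P z hn (k + n) = xor (P z hn n) (P z hn k) := by
  induction k with
  | zero => simp [P, Nat.zero_add]
  | succ k ih =>
    have h1 : k + 1 + n = (k + n) + 1 := by omega
    rw [h1]
    show xor (P z hn (k+n)) (z ⟨(k+n) % n, Nat.mod_lt _ hn⟩) = _
    have hfin : (⟨(k+n) % n, Nat.mod_lt _ hn⟩ : Fin n) = ⟨k % n, Nat.mod_lt _ hn⟩ :=
      Fin.ext (Nat.add_mod_right k n)
    rw [ih, hfin]
    show _ = xor (P z hn n) (xor (P z hn k) (z ⟨k % n, Nat.mod_lt _ hn⟩))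
    rw [Bool.xor_assoc]

lemma P_odd (z : Fin n → Bool) (hn : 0 < n) (k : ℕ) :
    P z hn k = true ↔
      Odd (((Finset.range k).filter (fun j => z ⟨j % n, Nat.mod_lt _ hn⟩ = true)).card) := by
  induction k with
  | zero => simp [P]
  | succ k ih =>
    rw [Finset.range_add_one, Finset.filter_insert]
    by_cases hz : z ⟨k % n, Nat.mod_lt _ hn⟩ = true
    · rw [if_pos hz, Finset.card_insert_of_notMem (by simp)]
      simp only [P, hz, Bool.xor_true, Bool.not_eq_true', Nat.odd_add_one]
      rw [← ih]
      cases P z hn k <;> simp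
    · rw [if_neg hz]
      have hz' : z ⟨k % n, Nat.mod_lt _ hn⟩ = false := by
        cases hh : z ⟨k % n, Nat.mod_lt _ hn⟩
        · rfl
        · exact absurd hh hz
      simp only [P, hz', Bool.xor_false]
      exact ih

lemma Pn_true (z : Fin n → Bool) (hn : 0 < n)
    (h : Odd (Finset.univ.filter fun i => z i = true).card) : P z hn n = true := by
  rw [P_odd]
  have hcard : (((Finset.range n).filter (fun j => z ⟨j % n, Nat.mod_lt _ hn⟩ = true)).card)
      = (Finset.univ.filter fun i : Fin n => z i = true).card := by
    rw [Finset.card_filter, Finset.card_filter,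
      ← Fin.sum_univ_eq_sum_range (fun j => if z ⟨j % n, Nat.mod_lt _ hn⟩ = true then 1 else 0) n]
    apply Finset.sum_congr rfl
    intro i _
    have hi : (⟨(i : ℕ) % n, Nat.mod_lt _ hn⟩ : Fin n) = i := Fin.ext (Nat.mod_eq_of_lt i.isLt)
    rw [hi]
  rw [hcard]; exact h

lemma cycSucc_ne {m : ℕ} (hm : 2 ≤ m) (a : Fin m) : cycSucc a ≠ a := by
  intro hEq
  have h1 : (a.val + 1) % m = a.val := congrArg Fin.val hEq
  have h2 : a.val < m := a.isLt
  rcases Nat.lt_or_ge (a.val + 1) m with hlt | hge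
  · rw [Nat.mod_eq_of_lt hlt] at h1; omega
  · have h3 : a.val + 1 = m := by omega
    rw [h3, Nat.mod_self] at h1
    omega

lemma Gz_adj (hn : 2 ≤ n) (z : Fin n → Bool) (a b : Fin n) (s t : Fin 2) :
    (Gz n z).Adj (a, s) (b, t) ↔
      (b = cycSucc a ∧ t = s + b2f (z a)) ∨ (a = cycSucc b ∧ s = t + b2f (z b)) := by
  rw [Gz, SimpleGraph.fromEdgeSet_adj]
  constructor
  · rintro ⟨⟨i, hi⟩, hne⟩
    by_cases hz : z i <;>
      simp only [hz, if_true, if_false, Sym2.eq_iff, Prod.mk.injEq] at hi <;>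
      rcases hi with (⟨⟨rfl, rfl⟩, ⟨rfl, rfl⟩⟩ | ⟨⟨rfl, rfl⟩, ⟨rfl, rfl⟩⟩) |
        (⟨⟨rfl, rfl⟩, ⟨rfl, rfl⟩⟩ | ⟨⟨rfl, rfl⟩, ⟨rfl, rfl⟩⟩) <;>
      first
        | (left; exact ⟨rfl, by simp [b2f, hz]⟩)
        | (right; exact ⟨rfl, by simp [b2f, hz]⟩)
  · rintro (⟨rfl, rfl⟩ | ⟨rfl, rfl⟩)
    · refine ⟨⟨a, ?_⟩, ?_⟩
      · by_cases hz : z a <;> fin_cases s <;> simp [hz, b2f, Sym2.eq_iff]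
      · intro hEq
        exact cycSucc_ne hn a (congrArg Prod.fst hEq).symm
    · refine ⟨⟨b, ?_⟩, ?_⟩
      · by_cases hz : z b <;> fin_cases t <;> simp [hz, b2f, Sym2.eq_iff]
      · intro hEq
        exact cycSucc_ne hn b (congrArg Prod.fst hEq)

/-- The walk vertex after `k` steps. -/
def F (z : Fin n → Bool) (hn : 0 < n) (k : ℕ) : Fin n × Fin 2 :=
  (⟨k % n, Nat.mod_lt _ hn⟩, b2f (P z hn k))

lemma F_adj (hn2 : 2 ≤ n) (z : Fin n → Bool) (hn : 0 < n) (k : ℕ) :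
    (Gz n z).Adj (F z hn k) (F z hn (k+1)) := by
  rw [F, F, Gz_adj hn2]
  left
  refine ⟨Fin.ext ?_, ?_⟩
  · show (k+1) % n = ((k % n) + 1) % n
    rw [Nat.mod_add_mod]
  · show b2f (xor (P z hn k) (z ⟨k % n, Nat.mod_lt _ hn⟩)) = _
    rw [b2f_xor]

end GzAux

open GzAux

theorem Gz_iso_cycle_of_odd (n : ℕ) (hn : 3 ≤ n) (z : Fin n → Bool)
    (h : Odd (Finset.univ.filter fun i => z i = true).card) :
    Nonempty (Gz n z ≃g cycleGraph (2 * n)) := by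
  have hn0 : 0 < n := by omega
  have hn2 : 2 ≤ n := by omega
  have h2n2 : 2 ≤ 2 * n := by omega
  have hPn : P z hn0 n = true := Pn_true z hn0 h
  set f : Fin (2 * n) → Fin n × Fin 2 := fun v => F z hn0 v.val with hf
  -- injectivity
  have hinj : Function.Injective f := by
    intro v w hvw
    have h1 : v.val % n = w.val % n := congrArg (fun p => (Prod.fst p).val) hvw
    have h2 : P z hn0 v.val = P z hn0 w.val := b2f_inj (congrArg Prod.snd hvw)
    have hvlt : v.val < 2 * n := v.isLt
    have hwlt : w.val < 2 * n := w.isLt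
    have hvd : v.val / n < 2 := Nat.div_lt_of_lt_mul (by omega : v.val < n * 2)
    have hwd : w.val / n < 2 := Nat.div_lt_of_lt_mul (by omega : w.val < n * 2)
    have hv := Nat.div_add_mod v.val n
    have hw := Nat.div_add_mod w.val n
    have key : v.val = w.val ∨ w.val = v.val + n ∨ v.val = w.val + n := by
      interval_cases hA : v.val / n <;> interval_cases hB : w.val / n <;> omega
    apply Fin.ext
    rcases key with hk | hk | hk
    · exact hk
    · exfalso
      rw [hk, P_add, hPn] at h2
      cases hP : P z hn0 v.val <;> rw [hP] at h2 <;> simp at h2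
    · exfalso
      rw [hk, P_add, hPn] at h2
      cases hP : P z hn0 w.val <;> rw [hP] at h2 <;> simp at h2
  have hbij : Function.Bijective f := by
    rw [Fintype.bijective_iff_injective_and_card]
    refine ⟨hinj, by simp [Fintype.card_prod, Nat.mul_comm]⟩
  -- f of cyclic successor
  have hfs : ∀ v : Fin (2 * n), f (cycSucc v) = F z hn0 (v.val + 1) := by
    intro v
    show F z hn0 ((v.val + 1) % (2 * n)) = F z hn0 (v.val + 1)
    rcases Nat.lt_or_ge (v.val + 1) (2 * n) with hlt | hge
    · rw [Nat.mod_eq_of_lt hlt]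
    · have hv1 : v.val + 1 = 2 * n := by have := v.isLt; omega
      rw [hv1, Nat.mod_self]
      have hP2n : P z hn0 (2 * n) = false := by
        have : 2 * n = n + n := by ring
        rw [this, P_add, hPn]
        cases hq : P z hn0 n <;> simp_all
      apply Prod.ext
      · exact Fin.ext (by simp [F, Nat.mul_mod_right])
      · show b2f (P z hn0 0) = b2f (P z hn0 (2 * n))
        rw [hP2n]; rfl
  -- the map-rel-iff
  have hmap : ∀ v w : Fin (2 * n), (Gz n z).Adj (f v) (f w) ↔ (cycleGraph (2 * n)).Adj v w := by
    intro v w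
    rw [cycleGraph, SimpleGraph.fromRel_adj]
    constructor
    · intro hadj
      have hadj' := (Gz_adj hn2 z _ _ _ _).mp hadj
      rcases hadj' with ⟨hc, hp⟩ | ⟨hc, hp⟩
      · have hwv : w = cycSucc v := by
          apply hinj
          rw [hfs v]
          apply Prod.ext
          · show (⟨w.val % n, _⟩ : Fin n) = ⟨(v.val + 1) % n, _⟩
            rw [hc]
            exact Fin.ext (Nat.mod_add_mod v.val n 1)
          · show b2f (P z hn0 w.val) = b2f (P z hn0 (v.val + 1))
            show _ = b2f (xor (P z hn0 v.val) (z ⟨v.val % n, Nat.mod_lt _ hn0⟩))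
            rw [b2f_xor]
            exact hp
        refine ⟨fun hEq => cycSucc_ne h2n2 v (hwv ▸ hEq.symm ▸ rfl), Or.inl hwv.symm⟩
      · have hvw : v = cycSucc w := by
          apply hinj
          rw [hfs w]
          apply Prod.ext
          · show (⟨v.val % n, _⟩ : Fin n) = ⟨(w.val + 1) % n, _⟩
            rw [hc]
            exact Fin.ext (Nat.mod_add_mod w.val n 1)
          · show b2f (P z hn0 v.val) = b2f (P z hn0 (w.val + 1))
            show _ = b2f (xor (P z hn0 w.val) (z ⟨w.val % n, Nat.mod_lt _ hn0⟩))
            rw [b2f_xor]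
            exact hp
        refine ⟨fun hEq => cycSucc_ne h2n2 w (hvw ▸ hEq ▸ rfl), Or.inr hvw.symm⟩
    · rintro ⟨hne, hsucc | hsucc⟩
      · have : f w = F z hn0 (v.val + 1) := by rw [← hsucc, hfs]
        rw [this]
        exact F_adj hn2 z hn0 v.val
      · have : f v = F z hn0 (w.val + 1) := by rw [← hsucc, hfs]
        rw [this]
        exact ((F_adj hn2 z hn0 w.val).symm)
  exact ⟨(SimpleGraph.Iso.symm
    { toEquiv := Equiv.ofBijective f hbij
      map_rel_iff' := fun {a b} => hmap a b })⟩
end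

section
/- Let n ≥ 3 and z : Fin n → Bool. If |z| is even, then G_z is isomorphic (as a simple graph) to the disjoint union (graph sum) of two cycle graphs on n vertices each. -/
/-!
`G_z` is the 2-lift of the `n`-cycle with voltages `z i ∈ ℤ/2`: the edge leaving level `a` over
`i` arrives at level `a + z i` over `i + 1`. If the total voltage `|z|` is even, it is a
coboundary: there is a potential `p` with `p (i + 1) = p i + z i`. Relabelling level `a` over `i`
as `a - p i` turns every edge into one that stays on its level, so `G_z ≅ C_n □ K̄₂ ≅ C_n ⊕ C_n`.
-/

open Finset

theorem exists_cycSucc_eq_add_of_sum_eq_zero {n : ℕ} {M : Type*} [AddCommMonoid M]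
    (w : Fin n → M) (hw : ∑ i, w i = 0) : ∃ p : Fin n → M, ∀ i, p (cycSucc i) = p i + w i := by
  let w' : ℕ → M := fun k => if h : k < n then w ⟨k, h⟩ else 0
  refine ⟨fun i => ∑ k ∈ range i, w' k, fun i => ?_⟩
  have hwi : w' i = w i := dif_pos i.isLt
  rw [← hwi, ← sum_range_succ]
  change ∑ k ∈ range ((i + 1) % n), w' k = _
  rcases Nat.lt_or_ge (i + 1) n with hlt | hge
  · rw [Nat.mod_eq_of_lt hlt]
  · have hi : (i : ℕ) + 1 = n := by omega
    have htotal : ∑ k ∈ range n, w' k = 0 := by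
      rw [← Fin.sum_univ_eq_sum_range, ← hw]
      exact sum_congr rfl fun k _ => dif_pos k.isLt
    rw [hi, Nat.mod_self, range_zero, sum_empty, htotal]

def SimpleGraph.boxProdBotFinTwoIsoSum {α : Type*} (G : SimpleGraph α) :
    G.boxProd (⊥ : SimpleGraph (Fin 2)) ≃g G ⊕g G where
  toEquiv := (Equiv.prodComm α (Fin 2)).trans
    ((finTwoEquiv.prodCongr (Equiv.refl α)).trans (Equiv.boolProdEquivSum α))
  map_rel_iff' := by
    rintro ⟨i, a⟩ ⟨j, b⟩
    fin_cases a <;> fin_cases b <;> simp [SimpleGraph.boxProd_adj, finTwoEquiv]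

section

variable {n : ℕ}

def Gz.voltage (z : Fin n → Bool) (i : Fin n) : Fin 2 := if z i then 1 else 0

theorem Gz.sum_voltage_eq_zero (z : Fin n → Bool)
    (h : Even (Finset.univ.filter fun i => z i = true).card) : ∑ i, Gz.voltage z i = 0 := by
  obtain ⟨m, hm⟩ := h
  simp only [Gz.voltage]
  rw [sum_ite, sum_const_zero, add_zero, sum_const, hm, ← two_mul, mul_nsmul, two_nsmul,
    show (1 : Fin 2) + 1 = 0 from rfl, nsmul_zero]

theorem Gz_eq_fromRel (z : Fin n → Bool) :
    Gz n z = SimpleGraph.fromRel fun x y => y.1 = cycSucc x.1 ∧ y.2 = x.2 + Gz.voltage z x.1 := by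
  ext ⟨i, a⟩ ⟨j, b⟩
  rw [Gz, SimpleGraph.fromEdgeSet_adj, SimpleGraph.fromRel_adj, and_comm]
  refine and_congr_right fun _ => ⟨?_, ?_⟩
  · rintro ⟨k, hk⟩
    cases hz : z k <;> simp only [hz, Gz.voltage] at hk ⊢ <;> aesop
  · rintro (⟨rfl, rfl⟩ | ⟨rfl, rfl⟩)
    · exact ⟨i, by cases hz : z i <;> fin_cases a <;> simp [hz, Gz.voltage]⟩
    · exact ⟨j, by cases hz : z j <;> fin_cases b <;> simp [hz, Gz.voltage]⟩

def Gz.isoBoxProdBot {z : Fin n → Bool} {p : Fin n → Fin 2}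
    (hp : ∀ i, p (cycSucc i) = p i + Gz.voltage z i) :
    Gz n z ≃g (cycleGraph n).boxProd (⊥ : SimpleGraph (Fin 2)) where
  toEquiv := Equiv.prodShear (Equiv.refl _) fun i => Equiv.subRight (p i)
  map_rel_iff' := by
    have lift_iff : ∀ i a b, b = a + Gz.voltage z i ↔ a - p i = b - p (cycSucc i) := by
      intro i a b
      rw [hp, sub_add_eq_sub_sub, sub_right_comm, sub_left_inj, eq_sub_iff_add_eq, eq_comm]
    -- Not automatic: `cycSucc i = i` when `n = 1`.
    have ne_cycSucc : ∀ {i a b}, a - p i = b - p (cycSucc i) → (i, a) ≠ (cycSucc i, b) →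
        i ≠ cycSucc i := by
      rintro i a b hq hne hi
      rw [← hi, sub_left_inj] at hq
      exact hne (Prod.ext hi hq)
    rintro ⟨i, a⟩ ⟨j, b⟩
    rw [Gz_eq_fromRel, SimpleGraph.boxProd_adj, cycleGraph, SimpleGraph.fromRel_adj,
      SimpleGraph.fromRel_adj]
    simp only [Equiv.prodShear_apply, Equiv.refl_apply, Equiv.subRight_apply,
      SimpleGraph.bot_adj, false_and, or_false]
    constructor
    · rintro ⟨⟨hne, rfl | rfl⟩, hq⟩
      · exact ⟨fun h => hne (congrArg Prod.fst h), .inl ⟨rfl, (lift_iff i a _).2 hq⟩⟩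
      · exact ⟨fun h => hne (congrArg Prod.fst h), .inr ⟨rfl, (lift_iff j b _).2 hq.symm⟩⟩
    · rintro ⟨hne, ⟨rfl, hb⟩ | ⟨rfl, ha⟩⟩
      · have hq := (lift_iff i a b).1 hb
        exact ⟨⟨ne_cycSucc hq hne, .inl rfl⟩, hq⟩
      · have hq := (lift_iff j b a).1 ha
        exact ⟨⟨(ne_cycSucc hq hne.symm).symm, .inr rfl⟩, hq.symm⟩

end

theorem Gz_iso_two_cycles_of_even_general (n : ℕ) (z : Fin n → Bool)
    (h : Even (Finset.univ.filter fun i => z i = true).card) :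
    Nonempty (Gz n z ≃g (cycleGraph n ⊕g cycleGraph n)) := by
  obtain ⟨p, hp⟩ := exists_cycSucc_eq_add_of_sum_eq_zero _ (Gz.sum_voltage_eq_zero z h)
  exact ⟨(Gz.isoBoxProdBot hp).trans (cycleGraph n).boxProdBotFinTwoIsoSum⟩

theorem Gz_iso_two_cycles_of_even (n : ℕ) (hn : 3 ≤ n) (z : Fin n → Bool)
    (h : Even (Finset.univ.filter fun i => z i = true).card) :
    Nonempty (Gz n z ≃g (cycleGraph n ⊕g cycleGraph n)) :=
  Gz_iso_two_cycles_of_even_general n z h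
end

section
/- Let n ≥ 3 be odd and z : Fin n → Bool. Then the graph G_z has a perfect matching if and only if |z| is odd. -/
open Finset Function

namespace SimpleGraph

variable {V W : Type*} {G : SimpleGraph V} {G' : SimpleGraph W}

lemma exists_isPerfectMatching_of_involutive {f : V → V} (hf : Involutive f)
    (hadj : ∀ v, G.Adj v (f v)) : ∃ M : G.Subgraph, M.IsPerfectMatching :=
  ⟨{ verts := Set.univ
     Adj := fun v w => f v = w
     adj_sub := by rintro v _ rfl; exact hadj v
     edge_vert := fun _ => Set.mem_univ _
     symm := ⟨fun v w h => h ▸ hf v⟩ },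
   Subgraph.isPerfectMatching_iff.2 fun v => ⟨f v, rfl, fun _ h => Eq.symm h⟩⟩

lemma exists_isPerfectMatching_pathGraph (m : ℕ) :
    ∃ M : (pathGraph (2 * m)).Subgraph, M.IsPerfectMatching := by
  refine exists_isPerfectMatching_of_involutive
    (f := fun k => ⟨if k.val % 2 = 0 then k.val + 1 else k.val - 1, by split_ifs <;> omega⟩)
    (fun k => ?_) (fun k => ?_)
  · ext; dsimp only; split_ifs <;> omega
  · rw [pathGraph_adj]; dsimp only; split_ifs <;> omega

lemma Subgraph.IsPerfectMatching.map {M : G.Subgraph} (hM : M.IsPerfectMatching)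
    (f : G →g G') (hf : Bijective f) : (M.map f).IsPerfectMatching := by
  refine ⟨hM.1.map f hf.1, fun w => ?_⟩
  obtain ⟨v, rfl⟩ := hf.2 w
  exact ⟨v, hM.2 v, rfl⟩

lemma Subgraph.IsPerfectMatching.even_card_of_adj_closed [Fintype V] {M : G.Subgraph}
    (hM : M.IsPerfectMatching) {s : Finset V} (hs : ∀ ⦃v w⦄, G.Adj v w → v ∈ s → w ∈ s) :
    Even #s := by
  classical
  have hMs : (M.induce s).IsMatching := by
    rintro v (hv : v ∈ s)
    obtain ⟨w, hvw, huniq⟩ := hM.1 (hM.2 v)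
    exact ⟨w, ⟨hv, hs (M.adj_sub hvw) hv, hvw⟩, fun y hy => huniq y hy.2.2⟩
  simpa using hMs.even_card

end SimpleGraph

open SimpleGraph

namespace Gz

variable {n : ℕ} {z : Fin n → Bool} {i : Fin n}

lemma cycSucc_val_of_lt (h : i.val + 1 < n) : (cycSucc i).val = i.val + 1 :=
  Nat.mod_eq_of_lt h

lemma cycSucc_val_of_last (h : i.val + 1 = n) : (cycSucc i).val = 0 := by
  simp [cycSucc, h]

def twist (z : Fin n → Bool) (i : Fin n) : Fin 2 := if z i then 1 else 0

def twistPrefix (z : Fin n → Bool) (i : Fin n) : Fin 2 := ∑ j ∈ Iio i, twist z j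

def twistTotal (z : Fin n → Bool) : Fin 2 := ∑ j, twist z j

open Fin.CommRing in
lemma twistTotal_eq_one_iff :
    twistTotal z = 1 ↔ Odd (Finset.univ.filter fun i => z i = true).card := by
  simp only [twistTotal, twist, Finset.sum_boole, Nat.odd_iff, Fin.ext_iff, Fin.val_natCast]
  rfl

lemma adj_iff {v w : Fin n × Fin 2} :
    (Gz n z).Adj v w ↔ v ≠ w ∧ ∃ i a, s(v, w) = s((i, a), (cycSucc i, a + twist z i)) := by
  rw [Gz, fromEdgeSet_adj, and_comm]
  refine and_congr_right fun _ => exists_congr fun i => ?_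
  rw [Fin.exists_fin_two]
  cases hz : z i <;> simp [twist, hz]

lemma twistPrefix_cycSucc_of_lt (h : i.val + 1 < n) :
    twistPrefix z (cycSucc i) = twistPrefix z i + twist z i := by
  have : Iio (cycSucc i) = insert i (Iio i) := by
    ext j
    simp only [mem_Iio, mem_insert, Fin.lt_def, Fin.ext_iff, cycSucc_val_of_lt h]
    omega
  rw [twistPrefix, this, sum_insert (by simp), add_comm]
  rfl

lemma twistPrefix_cycSucc_of_last (h : i.val + 1 = n) : twistPrefix z (cycSucc i) = 0 :=
  sum_eq_zero fun j hj => absurd (mem_Iio.1 hj)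
    (by simp [Fin.lt_def, cycSucc_val_of_last h])

lemma twistPrefix_add_twist_of_last (h : i.val + 1 = n) :
    twistPrefix z i + twist z i = twistTotal z := by
  have : (univ : Finset (Fin n)) = insert i (Iio i) := by
    ext j
    simp only [mem_univ, mem_Iio, mem_insert, Fin.lt_def, Fin.ext_iff, true_iff]
    omega
  rw [twistTotal, this, sum_insert (by simp), add_comm]
  rfl

lemma twistPrefix_cycSucc_of_twistTotal_eq_zero (htot : twistTotal z = 0) (i : Fin n) :
    twistPrefix z (cycSucc i) = twistPrefix z i + twist z i := by
  rcases (Nat.succ_le_of_lt i.isLt).lt_or_eq with h | h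
  · exact twistPrefix_cycSucc_of_lt h
  · rw [twistPrefix_cycSucc_of_last h, twistPrefix_add_twist_of_last h, htot]

lemma not_exists_isPerfectMatching_of_twistTotal_eq_zero (hodd : Odd n)
    (htot : twistTotal z = 0) : ¬ ∃ M : (Gz n z).Subgraph, M.IsPerfectMatching := by
  rintro ⟨M, hM⟩
  let sheet := univ.image fun i => (i, twistPrefix z i)
  have hclosed : ∀ ⦃v w⦄, (Gz n z).Adj v w → v ∈ sheet → w ∈ sheet := by
    intro v w hvw hv
    obtain ⟨i, -, rfl⟩ := mem_image.1 hv
    obtain ⟨-, j, a, he⟩ := adj_iff.1 hvw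
    simp only [sheet, mem_image, mem_univ, true_and]
    have hstep := twistPrefix_cycSucc_of_twistTotal_eq_zero htot j
    rcases Sym2.eq_iff.1 he with ⟨hv, rfl⟩ | ⟨hv, rfl⟩ <;>
      obtain ⟨rfl, hpar⟩ := Prod.mk.injEq _ _ _ _ ▸ hv
    · exact ⟨_, by rw [hstep, hpar]⟩
    · exact ⟨j, by rw [add_right_cancel (hpar.symm.trans hstep)]⟩
  have := hM.even_card_of_adj_closed hclosed
  rw [card_image_of_injective _ fun i j h => congrArg Prod.fst h, card_univ,
    Fintype.card_fin] at this
  exact Nat.not_even_iff_odd.2 hodd this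

def hamPath (z : Fin n → Bool) : Fin (2 * n) ≃ Fin n × Fin 2 :=
  finProdFinEquiv.symm.trans <| (Equiv.prodComm _ _).trans <|
    Equiv.prodShear (Equiv.refl _) fun i => Equiv.addRight (twistPrefix z i)

lemma hamPath_finProdFinEquiv (s : Fin 2) (i : Fin n) :
    hamPath z (finProdFinEquiv (s, i)) = (i, s + twistPrefix z i) := by
  simp [hamPath]

lemma hamPath_succ (htot : twistTotal z = 1) {p q : Fin (2 * n)} (h : p.val + 1 = q.val) :
    hamPath z q = (cycSucc (hamPath z p).1, (hamPath z p).2 + twist z (hamPath z p).1) := by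
  obtain ⟨⟨s, i⟩, rfl⟩ := finProdFinEquiv.surjective p
  simp only [finProdFinEquiv_apply_val] at h
  rw [hamPath_finProdFinEquiv]
  rcases (Nat.succ_le_of_lt i.isLt).lt_or_eq with hi | hi
  · have hq : q = finProdFinEquiv (s, cycSucc i) :=
      Fin.ext (by simp only [finProdFinEquiv_apply_val, cycSucc_val_of_lt hi]; omega)
    rw [hq, hamPath_finProdFinEquiv, twistPrefix_cycSucc_of_lt hi, add_assoc]
  · obtain rfl : s = 0 := Fin.ext <| Nat.lt_one_iff.1 <|
      Nat.lt_of_mul_lt_mul_left (a := n) (by have := q.isLt; omega)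
    have hq : q = finProdFinEquiv (1, cycSucc i) := Fin.ext (by
      simp only [finProdFinEquiv_apply_val, cycSucc_val_of_last hi, Fin.val_zero, Fin.val_one,
        mul_zero, mul_one] at h ⊢
      omega)
    rw [hq, hamPath_finProdFinEquiv, twistPrefix_cycSucc_of_last hi, zero_add, add_zero,
      twistPrefix_add_twist_of_last hi, htot]

lemma adj_hamPath_of_succ (htot : twistTotal z = 1) {p q : Fin (2 * n)}
    (h : p.val + 1 = q.val) : (Gz n z).Adj (hamPath z p) (hamPath z q) :=
  adj_iff.2 ⟨(hamPath z).injective.ne (by rintro rfl; omega), _, _, by rw [hamPath_succ htot h]⟩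

lemma exists_isPerfectMatching_of_twistTotal_eq_one (htot : twistTotal z = 1) :
    ∃ M : (Gz n z).Subgraph, M.IsPerfectMatching := by
  let f : pathGraph (2 * n) →g Gz n z :=
    ⟨hamPath z, fun h => (pathGraph_adj.1 h).elim (adj_hamPath_of_succ htot)
      fun h => (adj_hamPath_of_succ htot h).symm⟩
  obtain ⟨M, hM⟩ := exists_isPerfectMatching_pathGraph n
  exact ⟨_, hM.map f (hamPath z).bijective⟩

end Gz

theorem Gz_perfectMatching_iff_odd_general (n : ℕ) (hodd : Odd n) (z : Fin n → Bool) :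
    (∃ M : (Gz n z).Subgraph, M.IsPerfectMatching) ↔
      Odd (Finset.univ.filter fun i => z i = true).card := by
  rw [← Gz.twistTotal_eq_one_iff]
  refine ⟨fun hM => ?_, Gz.exists_isPerfectMatching_of_twistTotal_eq_one⟩
  by_contra htot
  exact Gz.not_exists_isPerfectMatching_of_twistTotal_eq_zero hodd (by omega) hM

theorem Gz_perfectMatching_iff_odd (n : ℕ) (hn : 3 ≤ n) (hodd : Odd n) (z : Fin n → Bool) :
    (∃ M : (Gz n z).Subgraph, M.IsPerfectMatching) ↔
      Odd (Finset.univ.filter fun i => z i = true).card :=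
  Gz_perfectMatching_iff_odd_general n hodd z
end

section
/- Let n ≥ 3 and x, y : Fin n → Bool. Then the graph H_{x,y} is connected if and only if |x ∧ y| is odd. -/
/-- The graph `H_{x,y}` on the `10n` vertices `Fin n × Fin 10`, where for `i : Fin n` the
vertex `(i, 0)` is `t_i`, `(i, 1)` is `b_i`, `(i, 2)` is `k_i^{tt}`, `(i, 3)` is `ℓ_i^{tt}`,
`(i, 4)` is `k_i^{bb}`, `(i, 5)` is `ℓ_i^{bb}`, `(i, 6)` is `k_i^{tb}`, `(i, 7)` is `ℓ_i^{tb}`,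
`(i, 8)` is `k_i^{bt}`, and `(i, 9)` is `ℓ_i^{bt}`.  The edges (indices mod `n`) are:
top horizontal gadget `{k_i^{tt}, t_{i+1}}`, `{ℓ_i^{tt}, t_{i+1}}` always, `{t_i, k_i^{tt}}` if
`x i = false`, `{t_i, ℓ_i^{tt}}` if `y i = false`; the analogous bottom horizontal gadget;
top-to-bottom diagonal gadget `{t_i, k_i^{tb}}` always, `{t_i, ℓ_i^{tb}}` if `x i = true`,
`{k_i^{tb}, ℓ_i^{tb}}` if `y i = false`, `{ℓ_i^{tb}, b_{i+1}}` if `y i = true`; and the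
analogous bottom-to-top diagonal gadget. -/
def Hxy (n : ℕ) (x y : Fin n → Bool) : SimpleGraph (Fin n × Fin 10) :=
  SimpleGraph.fromEdgeSet { e | ∃ i : Fin n,
    -- top horizontal gadget
    e = s((i, 2), (cycSucc i, 0)) ∨ e = s((i, 3), (cycSucc i, 0)) ∨
    (x i = false ∧ e = s((i, 0), (i, 2))) ∨ (y i = false ∧ e = s((i, 0), (i, 3))) ∨
    -- bottom horizontal gadget
    e = s((i, 4), (cycSucc i, 1)) ∨ e = s((i, 5), (cycSucc i, 1)) ∨
    (x i = false ∧ e = s((i, 1), (i, 4))) ∨ (y i = false ∧ e = s((i, 1), (i, 5))) ∨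
    -- top-to-bottom diagonal gadget
    e = s((i, 0), (i, 6)) ∨ (x i = true ∧ e = s((i, 0), (i, 7))) ∨
    (y i = false ∧ e = s((i, 6), (i, 7))) ∨ (y i = true ∧ e = s((i, 7), (cycSucc i, 1))) ∨
    -- bottom-to-top diagonal gadget
    e = s((i, 1), (i, 8)) ∨ (x i = true ∧ e = s((i, 1), (i, 9))) ∨
    (y i = false ∧ e = s((i, 8), (i, 9))) ∨ (y i = true ∧ e = s((i, 9), (cycSucc i, 0))) }


/-!
Each gadget joins the hubs `t_i, b_i` to `t_{i+1}, b_{i+1}`: straight across when `x_i ∧ y_i`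
fails, crosswise when it holds, and every other vertex hangs off a hub. So `H_{x,y}` is connected
exactly when this double cover of the `n`-cycle is, i.e. when the total number of crossings is odd:
then walking once around the cycle from `t_0` ends at `b_0`; otherwise the parity of the crossings
met so far is a colouring, constant along edges, that separates `t_0` from `b_0`.
-/

open Finset SimpleGraph Fin.NatCast

lemma SimpleGraph.Reachable.eq_of_forall_adj {V α : Type*} {G : SimpleGraph V} {f : V → α}
    (hf : ∀ u v, G.Adj u v → f u = f v) {u v : V} (h : G.Reachable u v) : f u = f v := by
  obtain ⟨w⟩ := h
  induction w with
  | nil => rfl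
  | cons hadj _ ih => exact (hf _ _ hadj).trans ih

namespace Hxy

variable {n : ℕ} {x y : Fin n → Bool}

variable (x y) in
def twist (i : Fin n) : ZMod 2 := if x i = true ∧ y i = true then 1 else 0

/-- `hub i 0` is `t_i` and `hub i 1` is `b_i`. -/
def hub (i : Fin n) (s : ZMod 2) : Fin n × Fin 10 := (i, Fin.castLE (by norm_num) s)

@[simp] lemma hub_zero (i : Fin n) : hub i 0 = (i, 0) := rfl

@[simp] lemma hub_one (i : Fin n) : hub i 1 = (i, 1) := rfl

lemma reachable_hub_cycSucc (i : Fin n) (s : ZMod 2) :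
    (Hxy n x y).Reachable (hub i s) (hub (cycSucc i) (s + twist x y i)) := by
  obtain rfl | rfl : s = 0 ∨ s = 1 := by decide +revert
  all_goals
    cases hx : x i <;> cases hy : y i <;>
      simp only [twist, hx, hy, Bool.false_eq_true, and_false, false_and, and_self, if_true,
        if_false, add_zero, zero_add, CharTwo.add_self_eq_zero, hub_zero, hub_one]
  · refine (Adj.reachable (v := (i, 2)) ?_).trans (Adj.reachable ?_) <;> simp [Hxy, exists_or, *]
  · refine (Adj.reachable (v := (i, 2)) ?_).trans (Adj.reachable ?_) <;> simp [Hxy, exists_or, *]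
  · refine (Adj.reachable (v := (i, 3)) ?_).trans (Adj.reachable ?_) <;> simp [Hxy, exists_or, *]
  · refine (Adj.reachable (v := (i, 7)) ?_).trans (Adj.reachable ?_) <;> simp [Hxy, exists_or, *]
  · refine (Adj.reachable (v := (i, 4)) ?_).trans (Adj.reachable ?_) <;> simp [Hxy, exists_or, *]
  · refine (Adj.reachable (v := (i, 4)) ?_).trans (Adj.reachable ?_) <;> simp [Hxy, exists_or, *]
  · refine (Adj.reachable (v := (i, 5)) ?_).trans (Adj.reachable ?_) <;> simp [Hxy, exists_or, *]
  · refine (Adj.reachable (v := (i, 9)) ?_).trans (Adj.reachable ?_) <;> simp [Hxy, exists_or, *]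

lemma exists_reachable_hub (v : Fin n × Fin 10) : ∃ i s, (Hxy n x y).Reachable (hub i s) v := by
  obtain ⟨i, j⟩ := v
  fin_cases j
  · exact ⟨i, 0, .rfl⟩
  · exact ⟨i, 1, .rfl⟩
  · exact ⟨cycSucc i, 0, Adj.reachable (by simp [Hxy, exists_or])⟩
  · exact ⟨cycSucc i, 0, Adj.reachable (by simp [Hxy, exists_or])⟩
  · exact ⟨cycSucc i, 1, Adj.reachable (by simp [Hxy, exists_or])⟩
  · exact ⟨cycSucc i, 1, Adj.reachable (by simp [Hxy, exists_or])⟩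
  · exact ⟨i, 0, Adj.reachable (by simp [Hxy, exists_or])⟩
  · cases hx : x i
    · cases hy : y i
      · exact ⟨i, 0, (Adj.reachable (v := (i, 6)) (by simp [Hxy, exists_or])).trans
          (Adj.reachable (by simp [Hxy, exists_or, *]))⟩
      · exact ⟨cycSucc i, 1, Adj.reachable (by simp [Hxy, exists_or, *])⟩
    · exact ⟨i, 0, Adj.reachable (by simp [Hxy, exists_or, *])⟩
  · exact ⟨i, 1, Adj.reachable (by simp [Hxy, exists_or])⟩
  · cases hx : x i
    · cases hy : y i
      · exact ⟨i, 1, (Adj.reachable (v := (i, 8)) (by simp [Hxy, exists_or])).trans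
          (Adj.reachable (by simp [Hxy, exists_or, *]))⟩
      · exact ⟨cycSucc i, 0, Adj.reachable (by simp [Hxy, exists_or, *])⟩
    · exact ⟨i, 1, Adj.reachable (by simp [Hxy, exists_or, *])⟩

variable (y) in
/-- Every non-hub vertex takes the colour of the hub it hangs off. -/
def color (p : Fin n → ZMod 2) (v : Fin n × Fin 10) : ZMod 2 :=
  let i := v.1
  let q := p (cycSucc i)
  ![p i, p i + 1, q, q, q + 1, q + 1, p i, if y i then q + 1 else p i, p i + 1,
    if y i then q else p i + 1] v.2

lemma color_eq_of_adj {p : Fin n → ZMod 2} (hp : ∀ i, p (cycSucc i) = p i + twist x y i)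
    {u v : Fin n × Fin 10} (h : (Hxy n x y).Adj u v) : color y p u = color y p v := by
  obtain ⟨⟨i, hc⟩, -⟩ := (fromEdgeSet_adj _).1 h
  have hpi := hp i
  rcases hc with h | h | ⟨hs, h⟩ | ⟨hs, h⟩ | h | h | ⟨hs, h⟩ | ⟨hs, h⟩ | h | ⟨hs, h⟩ | ⟨hs, h⟩ |
      ⟨hs, h⟩ | h | ⟨hs, h⟩ | ⟨hs, h⟩ | ⟨hs, h⟩ <;>
    rw [Sym2.eq_iff] at h <;>
    rcases h with ⟨rfl, rfl⟩|⟨rfl, rfl⟩ <;>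
    cases hy : y i <;> simp [color, twist, add_assoc, CharTwo.add_self_eq_zero, *]

variable [NeZero n]

lemma cycSucc_eq_add_one (i : Fin n) : cycSucc i = i + 1 := by
  ext; simp [cycSucc, Fin.val_add, Nat.add_mod]

variable (x y) in
def twistSum (m : ℕ) : ZMod 2 := ∑ j ∈ range m, twist x y j

lemma twistSum_succ (m : ℕ) : twistSum x y (m + 1) = twistSum x y m + twist x y m :=
  sum_range_succ _ _

lemma twistSum_self_add (m : ℕ) : twistSum x y (n + m) = twistSum x y n + twistSum x y m := by
  simp [twistSum, sum_range_add]

lemma twistSum_self : twistSum x y n = #{i | x i = true ∧ y i = true} := by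
  rw [twistSum, ← Fin.sum_univ_eq_sum_range, ← sum_boole]
  simp only [Fin.cast_val_eq_self, twist]

lemma reachable_hub_twistSum (m : ℕ) :
    (Hxy n x y).Reachable (hub 0 0) (hub m (twistSum x y m)) := by
  induction m with
  | zero => rfl
  | succ m ih =>
    rw [twistSum_succ, Nat.cast_succ, ← cycSucc_eq_add_one]
    exact ih.trans (reachable_hub_cycSucc _ _)

lemma connected_of_twistSum_self_eq_one (h : twistSum x y n = 1) : (Hxy n x y).Connected := by
  have reach_hub (i : Fin n) (s : ZMod 2) : (Hxy n x y).Reachable (hub 0 0) (hub i s) := by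
    obtain rfl | rfl : s = twistSum x y i ∨ s = twistSum x y i + 1 := by
      generalize twistSum x y i = t; decide +revert
    · simpa using reachable_hub_twistSum (x := x) (y := y) i
    · simpa [twistSum_self_add, h, add_comm] using
        reachable_hub_twistSum (x := x) (y := y) (n + i)
  refine (connected_iff_exists_forall_reachable _).2 ⟨hub 0 0, fun v => ?_⟩
  obtain ⟨i, s, hv⟩ := exists_reachable_hub v
  exact (reach_hub i s).trans hv

lemma twistSum_cycSucc_of_twistSum_self_eq_zero (h : twistSum x y n = 0) (i : Fin n) :
    twistSum x y (cycSucc i) = twistSum x y i + twist x y i := by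
  have hsucc := twistSum_succ (x := x) (y := y) i
  rw [Fin.cast_val_eq_self] at hsucc
  show twistSum x y ((i.val + 1) % n) = _
  rcases (by omega : i.val + 1 < n ∨ i.val + 1 = n) with hi | hi
  · rw [Nat.mod_eq_of_lt hi, hsucc]
  · rw [← hsucc, hi, Nat.mod_self, h]
    exact sum_range_zero _

lemma not_connected_of_twistSum_self_eq_zero (h : twistSum x y n = 0) :
    ¬ (Hxy n x y).Connected := fun hconn => by
  have := (hconn.preconnected (hub 0 0) (hub 0 1)).eq_of_forall_adj
    (fun _ _ => color_eq_of_adj (p := fun i => twistSum x y i)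
      (twistSum_cycSucc_of_twistSum_self_eq_zero h))
  simp [color] at this

end Hxy

theorem Hxy_connected_iff_odd_general (n : ℕ) (x y : Fin n → Bool) :
    (Hxy n x y).Connected ↔
      Odd (Finset.univ.filter fun i => x i = true ∧ y i = true).card := by
  obtain rfl | hn := eq_zero_or_neZero n
  · exact iff_of_false (fun h => isEmptyElim h.nonempty.some) (by simp)
  rw [← ZMod.natCast_eq_one_iff_odd, ← Hxy.twistSum_self]
  obtain h | h : Hxy.twistSum x y n = 0 ∨ Hxy.twistSum x y n = 1 := by
    generalize Hxy.twistSum x y n = t; decide +revert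
  · exact iff_of_false (Hxy.not_connected_of_twistSum_self_eq_zero h) (by simp [h])
  · exact iff_of_true (Hxy.connected_of_twistSum_self_eq_one h) h

theorem Hxy_connected_iff_odd (n : ℕ) (hn : 3 ≤ n) (x y : Fin n → Bool) :
    (Hxy n x y).Connected ↔
      Odd (Finset.univ.filter fun i => x i = true ∧ y i = true).card :=
  Hxy_connected_iff_odd_general n x y
end

section
/- Let n ≥ 3 and x, y : Fin n → Bool. If |x ∧ y| is even, then the graph H_{x,y} has exactly two connected components. -/
namespace HxyAux

def g (n : ℕ) (x y : Fin n → Bool) (m : ℕ) : Bool :=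
  if h : m < n then x ⟨m, h⟩ && y ⟨m, h⟩ else false

def Pb (n : ℕ) (x y : Fin n → Bool) : ℕ → Bool
  | 0 => false
  | m + 1 => xor (Pb n x y m) (g n x y m)

lemma Pb_eq_parity (n : ℕ) (x y : Fin n → Bool) (m : ℕ) :
    Pb n x y m = decide (Odd (((Finset.range m).filter fun j => g n x y j = true).card)) := by
  induction m with
  | zero => simp [Pb]
  | succ m ih =>
    rw [Pb, ih, Finset.range_add_one, Finset.filter_insert]
    by_cases hg : g n x y m = true
    · rw [if_pos hg, Finset.card_insert_of_notMem (by simp), hg, Bool.xor_true]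
      by_cases hc : Odd ((Finset.filter (fun j => g n x y j = true) (Finset.range m)).card) <;>
        simp [Nat.odd_add_one, hc]
    · simp only [Bool.not_eq_true] at hg
      rw [if_neg (by simp [hg]), hg, Bool.xor_false]

lemma Pb_top (n : ℕ) (x y : Fin n → Bool)
    (h : Even ((Finset.univ.filter fun i => x i = true ∧ y i = true).card)) :
    Pb n x y n = false := by
  rw [Pb_eq_parity]
  have hcard : (((Finset.range n).filter fun j => g n x y j = true).card)
      = ((Finset.univ.filter fun i : Fin n => x i = true ∧ y i = true).card) := by
    rw [Finset.card_filter, Finset.card_filter, ← Fin.sum_univ_eq_sum_range]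
    refine Finset.sum_congr rfl fun i _ => ?_
    have : g n x y i.val = (x i && y i) := by simp [g, i.isLt]
    simp [this, Bool.and_eq_true]
  rw [hcard]
  simp [Nat.not_odd_iff_even, h]

lemma Pb_cycSucc (n : ℕ) (x y : Fin n → Bool)
    (h : Even ((Finset.univ.filter fun i => x i = true ∧ y i = true).card)) (i : Fin n) :
    Pb n x y (cycSucc i).val = xor (Pb n x y i.val) (x i && y i) := by
  have hg : g n x y i.val = (x i && y i) := by simp [g, i.isLt]
  rcases eq_or_lt_of_le (Nat.succ_le_of_lt i.isLt) with heq | hlt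
  · have heq' : i.val + 1 = n := heq
    have h0 : (cycSucc i).val = 0 := by simp [cycSucc, heq']
    have h2 : Pb n x y n = xor (Pb n x y i.val) (x i && y i) := by
      have hn2 : Pb n x y n = Pb n x y (i.val + 1) := by rw [heq']
      rw [hn2, Pb, hg]
    rw [h0]
    exact (Pb_top n x y h).symm.trans h2
  · have h1 : (cycSucc i).val = i.val + 1 := by simp [cycSucc, Nat.mod_eq_of_lt hlt]
    rw [h1, Pb, hg]


def col (n : ℕ) (x y : Fin n → Bool) (v : Fin n × Fin 10) : Bool :=
  let P := Pb n x y v.1.val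
  let P' := Pb n x y (cycSucc v.1).val
  if v.2.val = 0 then P
  else if v.2.val = 1 then !P
  else if v.2.val ≤ 3 then P'
  else if v.2.val ≤ 5 then !P'
  else if v.2.val = 6 then P
  else if v.2.val = 7 then (if y v.1 then !P' else P)
  else if v.2.val = 8 then !P
  else (if y v.1 then P' else !P)

section
variable (n : ℕ) (x y : Fin n → Bool) (i : Fin n)

lemma col0 : col n x y (i, 0) = Pb n x y i.val := rfl
lemma col1 : col n x y (i, 1) = !Pb n x y i.val := rfl
lemma col2 : col n x y (i, 2) = Pb n x y (cycSucc i).val := rfl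
lemma col3 : col n x y (i, 3) = Pb n x y (cycSucc i).val := rfl
lemma col4 : col n x y (i, 4) = !Pb n x y (cycSucc i).val := rfl
lemma col5 : col n x y (i, 5) = !Pb n x y (cycSucc i).val := rfl
lemma col6 : col n x y (i, 6) = Pb n x y i.val := rfl
lemma col7 : col n x y (i, 7) =
    (if y i then !Pb n x y (cycSucc i).val else Pb n x y i.val) := rfl
lemma col8 : col n x y (i, 8) = !Pb n x y i.val := rfl
lemma col9 : col n x y (i, 9) =
    (if y i then Pb n x y (cycSucc i).val else !Pb n x y i.val) := rfl

end

section
variable (n : ℕ) (x y : Fin n → Bool)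

lemma sym2_col {α : Type*} {c : α → Bool} {a b u v : α} (h : s(a,b) = s(u,v))
    (huv : c u = c v) : c a = c b := by
  rw [Sym2.eq_iff] at h
  rcases h with ⟨rfl, rfl⟩ | ⟨rfl, rfl⟩
  · exact huv
  · exact huv.symm

lemma col_adj (h : Even ((Finset.univ.filter fun i => x i = true ∧ y i = true).card))
    {a b : Fin n × Fin 10} (hadj : (Hxy n x y).Adj a b) : col n x y a = col n x y b := by
  rw [Hxy, SimpleGraph.fromEdgeSet_adj] at hadj
  obtain ⟨⟨i, hc⟩, -⟩ := hadj
  have hstep := Pb_cycSucc n x y h i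
  rcases hc with hc|hc|⟨hx,hc⟩|⟨hy,hc⟩|hc|hc|⟨hx,hc⟩|⟨hy,hc⟩|hc|⟨hx,hc⟩|⟨hy,hc⟩|⟨hy,hc⟩|hc|⟨hx,hc⟩|⟨hy,hc⟩|⟨hy,hc⟩ <;>
    refine sym2_col hc ?_ <;>
    simp only [col0, col1, col2, col3, col4, col5, col6, col7, col8, col9, hstep] <;>
    cases hyi : y i <;> simp_all

end
section
variable (n : ℕ) (x y : Fin n → Bool)

lemma adj_helper {a b : Fin n × Fin 10} (hne : b.2 ≠ a.2)
    (hm : ∃ i : Fin n,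
    s(a,b) = s((i, 2), (cycSucc i, 0)) ∨ s(a,b) = s((i, 3), (cycSucc i, 0)) ∨
    (x i = false ∧ s(a,b) = s((i, 0), (i, 2))) ∨ (y i = false ∧ s(a,b) = s((i, 0), (i, 3))) ∨
    s(a,b) = s((i, 4), (cycSucc i, 1)) ∨ s(a,b) = s((i, 5), (cycSucc i, 1)) ∨
    (x i = false ∧ s(a,b) = s((i, 1), (i, 4))) ∨ (y i = false ∧ s(a,b) = s((i, 1), (i, 5))) ∨
    s(a,b) = s((i, 0), (i, 6)) ∨ (x i = true ∧ s(a,b) = s((i, 0), (i, 7))) ∨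
    (y i = false ∧ s(a,b) = s((i, 6), (i, 7))) ∨ (y i = true ∧ s(a,b) = s((i, 7), (cycSucc i, 1))) ∨
    s(a,b) = s((i, 1), (i, 8)) ∨ (x i = true ∧ s(a,b) = s((i, 1), (i, 9))) ∨
    (y i = false ∧ s(a,b) = s((i, 8), (i, 9))) ∨ (y i = true ∧ s(a,b) = s((i, 9), (cycSucc i, 0)))) :
    (Hxy n x y).Adj a b := by
  rw [Hxy, SimpleGraph.fromEdgeSet_adj]
  exact ⟨hm, fun hab => hne (congrArg Prod.snd hab.symm)⟩

variable (i : Fin n)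

lemma adjA : (Hxy n x y).Adj (i,2) (cycSucc i,0) :=
  adj_helper n x y (by simp) ⟨i, Or.inl rfl⟩
lemma adjB : (Hxy n x y).Adj (i,3) (cycSucc i,0) :=
  adj_helper n x y (by simp) ⟨i, Or.inr (Or.inl rfl)⟩
lemma adjC (hx : x i = false) : (Hxy n x y).Adj (i,0) (i,2) :=
  adj_helper n x y (by simp) ⟨i, Or.inr (Or.inr (Or.inl (⟨hx, rfl⟩)))⟩
lemma adjD (hy : y i = false) : (Hxy n x y).Adj (i,0) (i,3) :=
  adj_helper n x y (by simp) ⟨i, Or.inr (Or.inr (Or.inr (Or.inl (⟨hy, rfl⟩))))⟩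
lemma adjE : (Hxy n x y).Adj (i,4) (cycSucc i,1) :=
  adj_helper n x y (by simp) ⟨i, Or.inr (Or.inr (Or.inr (Or.inr (Or.inl rfl))))⟩
lemma adjF : (Hxy n x y).Adj (i,5) (cycSucc i,1) :=
  adj_helper n x y (by simp) ⟨i, Or.inr (Or.inr (Or.inr (Or.inr (Or.inr (Or.inl rfl)))))⟩
lemma adjG (hx : x i = false) : (Hxy n x y).Adj (i,1) (i,4) :=
  adj_helper n x y (by simp) ⟨i, Or.inr (Or.inr (Or.inr (Or.inr (Or.inr (Or.inr (Or.inl (⟨hx, rfl⟩)))))))⟩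
lemma adjH (hy : y i = false) : (Hxy n x y).Adj (i,1) (i,5) :=
  adj_helper n x y (by simp) ⟨i, Or.inr (Or.inr (Or.inr (Or.inr (Or.inr (Or.inr (Or.inr (Or.inl (⟨hy, rfl⟩))))))))⟩
lemma adjI : (Hxy n x y).Adj (i,0) (i,6) :=
  adj_helper n x y (by simp) ⟨i, Or.inr (Or.inr (Or.inr (Or.inr (Or.inr (Or.inr (Or.inr (Or.inr (Or.inl rfl))))))))⟩
lemma adjJ (hx : x i = true) : (Hxy n x y).Adj (i,0) (i,7) :=
  adj_helper n x y (by simp) ⟨i, Or.inr (Or.inr (Or.inr (Or.inr (Or.inr (Or.inr (Or.inr (Or.inr (Or.inr (Or.inl (⟨hx, rfl⟩))))))))))⟩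
lemma adjK (hy : y i = false) : (Hxy n x y).Adj (i,6) (i,7) :=
  adj_helper n x y (by simp) ⟨i, Or.inr (Or.inr (Or.inr (Or.inr (Or.inr (Or.inr (Or.inr (Or.inr (Or.inr (Or.inr (Or.inl (⟨hy, rfl⟩)))))))))))⟩
lemma adjL (hy : y i = true) : (Hxy n x y).Adj (i,7) (cycSucc i,1) :=
  adj_helper n x y (by simp) ⟨i, Or.inr (Or.inr (Or.inr (Or.inr (Or.inr (Or.inr (Or.inr (Or.inr (Or.inr (Or.inr (Or.inr (Or.inl (⟨hy, rfl⟩))))))))))))⟩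
lemma adjM : (Hxy n x y).Adj (i,1) (i,8) :=
  adj_helper n x y (by simp) ⟨i, Or.inr (Or.inr (Or.inr (Or.inr (Or.inr (Or.inr (Or.inr (Or.inr (Or.inr (Or.inr (Or.inr (Or.inr (Or.inl rfl))))))))))))⟩
lemma adjN (hx : x i = true) : (Hxy n x y).Adj (i,1) (i,9) :=
  adj_helper n x y (by simp) ⟨i, Or.inr (Or.inr (Or.inr (Or.inr (Or.inr (Or.inr (Or.inr (Or.inr (Or.inr (Or.inr (Or.inr (Or.inr (Or.inr (Or.inl (⟨hx, rfl⟩))))))))))))))⟩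
lemma adjO (hy : y i = false) : (Hxy n x y).Adj (i,8) (i,9) :=
  adj_helper n x y (by simp) ⟨i, Or.inr (Or.inr (Or.inr (Or.inr (Or.inr (Or.inr (Or.inr (Or.inr (Or.inr (Or.inr (Or.inr (Or.inr (Or.inr (Or.inr (Or.inl (⟨hy, rfl⟩)))))))))))))))⟩
lemma adjQ (hy : y i = true) : (Hxy n x y).Adj (i,9) (cycSucc i,0) :=
  adj_helper n x y (by simp) ⟨i, Or.inr (Or.inr (Or.inr (Or.inr (Or.inr (Or.inr (Or.inr (Or.inr (Or.inr (Or.inr (Or.inr (Or.inr (Or.inr (Or.inr (Or.inr (⟨hy, rfl⟩)))))))))))))))⟩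

end
section
variable (n : ℕ) (x y : Fin n → Bool)

def back (i : Fin n) (β : Bool) : Fin n × Fin 10 :=
  (i, if β = Pb n x y i.val then 0 else 1)

lemma col_back (i : Fin n) (β : Bool) : col n x y (back n x y i β) = β := by
  unfold back
  by_cases hb : β = Pb n x y i.val
  · rw [if_pos hb, col0, hb]
  · rw [if_neg hb, col1]
    cases β <;> cases hP : Pb n x y i.val <;> simp_all

lemma stepReach (h : Even ((Finset.univ.filter fun i => x i = true ∧ y i = true).card))
    (i : Fin n) (β : Bool) :
    (Hxy n x y).Reachable (back n x y i β) (back n x y (cycSucc i) β) := by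
  have hstep := Pb_cycSucc n x y h i
  unfold back
  by_cases hb : β = Pb n x y i.val
  · rw [if_pos hb]
    cases hx : x i <;> cases hy : y i
    · -- x f y f : via C then A
      rw [if_pos (by rw [hstep, hx]; simpa using hb)]
      exact ((adjC n x y i hx).reachable).trans (adjA n x y i).reachable
    · -- x f y t : via C then A
      rw [if_pos (by rw [hstep, hx]; simpa using hb)]
      exact ((adjC n x y i hx).reachable).trans (adjA n x y i).reachable
    · -- x t y f : via D then B
      rw [if_pos (by rw [hstep, hx, hy]; simpa using hb)]
      exact ((adjD n x y i hy).reachable).trans (adjB n x y i).reachable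
    · -- x t y t : crossover via J then L
      rw [if_neg (by rw [hstep, hx, hy]; revert hb; cases β <;> cases Pb n x y i.val <;> decide)]
      exact ((adjJ n x y i hx).reachable).trans (adjL n x y i hy).reachable
  · rw [if_neg hb]
    cases hx : x i <;> cases hy : y i
    · rw [if_neg (by rw [hstep, hx]; simpa using hb)]
      exact ((adjG n x y i hx).reachable).trans (adjE n x y i).reachable
    · rw [if_neg (by rw [hstep, hx]; simpa using hb)]
      exact ((adjG n x y i hx).reachable).trans (adjE n x y i).reachable
    · rw [if_neg (by rw [hstep, hx, hy]; simpa using hb)]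
      exact ((adjH n x y i hy).reachable).trans (adjF n x y i).reachable
    · rw [if_pos (by rw [hstep, hx, hy]; revert hb; cases β <;> cases Pb n x y i.val <;> decide)]
      exact ((adjN n x y i hx).reachable).trans (adjQ n x y i hy).reachable

lemma reach_zero (hn : 0 < n)
    (h : Even ((Finset.univ.filter fun i => x i = true ∧ y i = true).card)) (β : Bool) :
    ∀ m (hm : m < n),
      (Hxy n x y).Reachable (back n x y ⟨m, hm⟩ β) (back n x y ⟨0, hn⟩ β) := by
  intro m
  induction m with
  | zero => intro hm; rfl
  | succ m ih =>
    intro hm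
    have hmn : m < n := Nat.lt_of_succ_lt hm
    have hcs : cycSucc (⟨m, hmn⟩ : Fin n) = ⟨m + 1, hm⟩ := by
      simp [cycSucc, Nat.mod_eq_of_lt hm]
    exact ((hcs ▸ stepReach n x y h ⟨m, hmn⟩ β).symm).trans (ih hmn)

lemma back_reach_base (hn : 0 < n)
    (h : Even ((Finset.univ.filter fun i => x i = true ∧ y i = true).card))
    (i : Fin n) (β : Bool) :
    (Hxy n x y).Reachable (back n x y i β) (back n x y ⟨0, hn⟩ β) :=
  reach_zero n x y hn h β i.val i.isLt

end
section
variable (n : ℕ) (x y : Fin n → Bool)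

lemma back_eq0 (j : Fin n) : back n x y j (Pb n x y j.val) = (j, 0) := by
  unfold back; rw [if_pos rfl]

lemma back_eq1 (j : Fin n) : back n x y j (!Pb n x y j.val) = (j, 1) := by
  unfold back; rw [if_neg (by simp)]

lemma base0 (hn : 0 < n)
    (h : Even ((Finset.univ.filter fun i => x i = true ∧ y i = true).card)) (j : Fin n) :
    (Hxy n x y).Reachable (j, 0) (back n x y ⟨0, hn⟩ (Pb n x y j.val)) := by
  have := back_reach_base n x y hn h j (Pb n x y j.val)
  rwa [back_eq0] at this

lemma base1 (hn : 0 < n)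
    (h : Even ((Finset.univ.filter fun i => x i = true ∧ y i = true).card)) (j : Fin n) :
    (Hxy n x y).Reachable (j, 1) (back n x y ⟨0, hn⟩ (!Pb n x y j.val)) := by
  have := back_reach_base n x y hn h j (!Pb n x y j.val)
  rwa [back_eq1] at this

lemma reach_base (hn : 0 < n)
    (h : Even ((Finset.univ.filter fun i => x i = true ∧ y i = true).card))
    (v : Fin n × Fin 10) :
    (Hxy n x y).Reachable v (back n x y ⟨0, hn⟩ (col n x y v)) := by
  obtain ⟨i, k⟩ := v
  have base := back_reach_base n x y hn h
  fin_cases k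
  · show (Hxy n x y).Reachable (i, (0:Fin 10)) (back n x y ⟨0, hn⟩ (col n x y (i, (0:Fin 10))))
    rw [col0, ← back_eq0 n x y i]; exact back_reach_base n x y hn h i _
  · show (Hxy n x y).Reachable (i, (1:Fin 10)) (back n x y ⟨0, hn⟩ (col n x y (i, (1:Fin 10))))
    rw [col1, ← back_eq1 n x y i]; exact back_reach_base n x y hn h i _
  · show (Hxy n x y).Reachable (i, (2:Fin 10)) (back n x y ⟨0, hn⟩ (col n x y (i, (2:Fin 10))))
    rw [col2]; exact (adjA n x y i).reachable.trans (base0 n x y hn h (cycSucc i))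
  · show (Hxy n x y).Reachable (i, (3:Fin 10)) (back n x y ⟨0, hn⟩ (col n x y (i, (3:Fin 10))))
    rw [col3]; exact (adjB n x y i).reachable.trans (base0 n x y hn h (cycSucc i))
  · show (Hxy n x y).Reachable (i, (4:Fin 10)) (back n x y ⟨0, hn⟩ (col n x y (i, (4:Fin 10))))
    rw [col4]; exact (adjE n x y i).reachable.trans (base1 n x y hn h (cycSucc i))
  · show (Hxy n x y).Reachable (i, (5:Fin 10)) (back n x y ⟨0, hn⟩ (col n x y (i, (5:Fin 10))))
    rw [col5]; exact (adjF n x y i).reachable.trans (base1 n x y hn h (cycSucc i))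
  · show (Hxy n x y).Reachable (i, (6:Fin 10)) (back n x y ⟨0, hn⟩ (col n x y (i, (6:Fin 10))))
    rw [col6]; exact (adjI n x y i).symm.reachable.trans (base0 n x y hn h i)
  · show (Hxy n x y).Reachable (i, (7:Fin 10)) (back n x y ⟨0, hn⟩ (col n x y (i, (7:Fin 10))))
    rw [col7]
    cases hy : y i <;> simp only [Bool.false_eq_true, if_false, if_true]
    · exact ((adjK n x y i hy).symm.reachable.trans
        (adjI n x y i).symm.reachable).trans (base0 n x y hn h i)
    · exact (adjL n x y i hy).reachable.trans (base1 n x y hn h (cycSucc i))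
  · show (Hxy n x y).Reachable (i, (8:Fin 10)) (back n x y ⟨0, hn⟩ (col n x y (i, (8:Fin 10))))
    rw [col8]; exact (adjM n x y i).symm.reachable.trans (base1 n x y hn h i)
  · show (Hxy n x y).Reachable (i, (9:Fin 10)) (back n x y ⟨0, hn⟩ (col n x y (i, (9:Fin 10))))
    rw [col9]
    cases hy : y i <;> simp only [Bool.false_eq_true, if_false, if_true]
    · exact ((adjO n x y i hy).symm.reachable.trans
        (adjM n x y i).symm.reachable).trans (base1 n x y hn h i)
    · exact (adjQ n x y i hy).reachable.trans (base0 n x y hn h (cycSucc i))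

lemma reach_of_col_eq (hn : 0 < n)
    (h : Even ((Finset.univ.filter fun i => x i = true ∧ y i = true).card))
    {v w : Fin n × Fin 10} (hc : col n x y v = col n x y w) :
    (Hxy n x y).Reachable v w := by
  have h1 := reach_base n x y hn h v
  have h2 := reach_base n x y hn h w
  rw [← hc] at h2
  exact h1.trans h2.symm

end
end HxyAux

theorem Hxy_two_components_of_even (n : ℕ) (hn : 3 ≤ n) (x y : Fin n → Bool)
    (h : Even (Finset.univ.filter fun i => x i = true ∧ y i = true).card) :
    Nat.card (Hxy n x y).ConnectedComponent = 2 := by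
  classical
  have hn0 : 0 < n := by omega
  have hwalk : ∀ (v w : Fin n × Fin 10) (p : (Hxy n x y).Walk v w),
      HxyAux.col n x y v = HxyAux.col n x y w := by
    intro v w p
    induction p with
    | nil => rfl
    | cons ha _ ih => exact (HxyAux.col_adj n x y h ha).trans ih
  let F : (Hxy n x y).ConnectedComponent → Bool :=
    SimpleGraph.ConnectedComponent.lift (HxyAux.col n x y) (fun v w p _ => hwalk v w p)
  have hbij : Function.Bijective F := by
    constructor
    · intro c d
      refine SimpleGraph.ConnectedComponent.ind₂ (fun v w hcd => ?_) c d
      exact SimpleGraph.ConnectedComponent.sound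
        (HxyAux.reach_of_col_eq n x y hn0 h hcd)
    · intro b
      cases b
      · exact ⟨(Hxy n x y).connectedComponentMk (⟨0, hn0⟩, 0), rfl⟩
      · exact ⟨(Hxy n x y).connectedComponentMk (⟨0, hn0⟩, 1), rfl⟩
  rw [Nat.card_congr (Equiv.ofBijective F hbij)]
  simp [Nat.card_eq_fintype_card]
end

section
/- Let n ≥ 1 and Z : Fin n → Fin n → Bool. Then the determinant of the matrix M_Z over ℤ equals minus the number of pairs (i,j) with Z i j = true, i.e., det M_Z = -|Z|. -/
/-- The index type for the matrix `M_Z`: the distinguished vertex `s`, the distinguished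
vertex `t`, the left vertices `ℓ_i`, and the right vertices `r_j`. -/
abbrev Idx (n : ℕ) := Unit ⊕ Unit ⊕ Fin n ⊕ Fin n

/-- The distinguished index `s`. -/
def sV (n : ℕ) : Idx n := Sum.inl ()

/-- The distinguished index `t`. -/
def tV (n : ℕ) : Idx n := Sum.inr (Sum.inl ())

/-- The left index `ℓ_i`. -/
def lV {n : ℕ} (i : Fin n) : Idx n := Sum.inr (Sum.inr (Sum.inl i))

/-- The right index `r_j`. -/
def rV {n : ℕ} (j : Fin n) : Idx n := Sum.inr (Sum.inr (Sum.inr j))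

/-- The integer matrix `M_Z`: entry `1` at `(s, ℓ_i)`, `(r_j, t)` and `(t, s)`; entry `1` at
`(ℓ_i, r_j)` iff `Z i j = true`; diagonal entries `1` at `(ℓ_i, ℓ_i)` and `(r_j, r_j)`
(self-loops everywhere except at `s` and `t`); all other entries `0`. -/
def MZ (n : ℕ) (Z : Fin n → Fin n → Bool) : Matrix (Idx n) (Idx n) ℤ :=
  fun v w =>
    match v, w with
    | Sum.inl _, Sum.inr (Sum.inr (Sum.inl _)) => 1                 -- (s, ℓ_i)
    | Sum.inr (Sum.inr (Sum.inr _)), Sum.inr (Sum.inl _) => 1       -- (r_j, t)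
    | Sum.inr (Sum.inr (Sum.inl i)), Sum.inr (Sum.inr (Sum.inr j)) =>
        if Z i j then 1 else 0                                      -- (ℓ_i, r_j)
    | Sum.inr (Sum.inl _), Sum.inl _ => 1                           -- (t, s)
    | Sum.inr (Sum.inr (Sum.inl i)), Sum.inr (Sum.inr (Sum.inl i')) =>
        if i = i' then 1 else 0                                     -- (ℓ_i, ℓ_i)
    | Sum.inr (Sum.inr (Sum.inr j)), Sum.inr (Sum.inr (Sum.inr j')) =>
        if j = j' then 1 else 0                                     -- (r_j, r_j)
    | _, _ => 0

/-- An equivalence `Unit ⊕ Unit ≃ Fin 2`. -/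
def eUU : Unit ⊕ Unit ≃ Fin 2 :=
  ⟨fun x => Sum.elim (fun _ => 0) (fun _ => 1) x,
   fun k => if k = 0 then Sum.inl () else Sum.inr (),
   by rintro (⟨⟩|⟨⟩) <;> simp,
   by intro k; fin_cases k <;> simp⟩

@[simp] lemma eUU_symm_zero : eUU.symm 0 = Sum.inl () := rfl
@[simp] lemma eUU_symm_one : eUU.symm 1 = Sum.inr () := rfl

/-- Determinant of a matrix indexed by `Unit ⊕ Unit`. -/
lemma det_two (X : Matrix (Unit ⊕ Unit) (Unit ⊕ Unit) ℤ) :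
    X.det = X (Sum.inl ()) (Sum.inl ()) * X (Sum.inr ()) (Sum.inr ())
      - X (Sum.inl ()) (Sum.inr ()) * X (Sum.inr ()) (Sum.inl ()) := by
  rw [← Matrix.det_submatrix_equiv_self eUU.symm X, Matrix.det_fin_two]
  simp [Matrix.submatrix_apply]

theorem det_MZ (n : ℕ) (hn : 1 ≤ n) (Z : Fin n → Fin n → Bool) :
    (MZ n Z).det =
      -((Finset.univ.filter fun p : Fin n × Fin n => Z p.1 p.2 = true).card : ℤ) := by
  classical
  set A : Matrix (Fin n) (Fin n) ℤ := Matrix.of fun i j => if Z i j then 1 else 0 with hA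
  set P : Matrix (Unit ⊕ Unit) (Unit ⊕ Unit) ℤ :=
    Matrix.fromBlocks 0 0 (Matrix.of fun _ _ => 1) 0 with hP
  set Q : Matrix (Unit ⊕ Unit) (Fin n ⊕ Fin n) ℤ :=
    Matrix.fromBlocks (Matrix.of fun _ _ => 1) 0 0 0 with hQ
  set R : Matrix (Fin n ⊕ Fin n) (Unit ⊕ Unit) ℤ :=
    Matrix.fromBlocks 0 0 0 (Matrix.of fun _ _ => 1) with hR
  set S : Matrix (Fin n ⊕ Fin n) (Fin n ⊕ Fin n) ℤ := Matrix.fromBlocks 1 A 0 1 with hS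
  set T : Matrix (Fin n ⊕ Fin n) (Fin n ⊕ Fin n) ℤ := Matrix.fromBlocks 1 (-A) 0 1 with hT
  have hST : S * T = 1 := by
    rw [hS, hT, Matrix.fromBlocks_multiply]
    simp [Matrix.fromBlocks_one]
  have hTS : T * S = 1 := by
    rw [hS, hT, Matrix.fromBlocks_multiply]
    simp [Matrix.fromBlocks_one]
  haveI : Invertible S := ⟨T, hTS, hST⟩
  have hinv : ⅟S = T := invOf_eq_right_inv hST
  set e : (Unit ⊕ Unit) ⊕ (Fin n ⊕ Fin n) ≃ Idx n := Equiv.sumAssoc Unit Unit (Fin n ⊕ Fin n)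
  have hM : MZ n Z = (Matrix.fromBlocks P Q R S).submatrix e.symm e.symm := by
    ext v w
    rcases v with _ | (_ | (i | j)) <;> rcases w with _ | (_ | (i' | j')) <;>
      simp [MZ, hP, hQ, hR, hS, hA, e, Matrix.one_apply, Matrix.submatrix_apply,
        Equiv.sumAssoc, Matrix.fromBlocks]
  have hdetS : S.det = 1 := by
    rw [hS, Matrix.det_fromBlocks_zero₂₁]; simp
  rw [hM, Matrix.det_submatrix_equiv_self, Matrix.det_fromBlocks₂₂, hdetS, one_mul, det_two]
  have hcard : ∑ i : Fin n, ∑ j : Fin n, (if Z i j then (1:ℤ) else 0) =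
      ((Finset.univ.filter fun p : Fin n × Fin n => Z p.1 p.2 = true).card : ℤ) := by
    rw [← Fintype.sum_prod_type', Finset.sum_boole]
  have h11 : (P - Q * ⅟S * R) (Sum.inl ()) (Sum.inl ()) = 0 := by
    simp [hP, hQ, hR, hT, hinv, Matrix.mul_apply, Fintype.sum_sum_type]
  have h22 : (P - Q * ⅟S * R) (Sum.inr ()) (Sum.inr ()) = 0 := by
    simp [hP, hQ, hR, hT, hinv, Matrix.mul_apply, Fintype.sum_sum_type]
  have h21 : (P - Q * ⅟S * R) (Sum.inr ()) (Sum.inl ()) = 1 := by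
    simp [hP, hQ, hR, hT, hinv, Matrix.mul_apply, Fintype.sum_sum_type]
  have h12 : (P - Q * ⅟S * R) (Sum.inl ()) (Sum.inr ()) =
      ∑ i : Fin n, ∑ j : Fin n, (if Z i j then (1:ℤ) else 0) := by
    simp [-Finset.sum_boole, hP, hQ, hR, hT, hA, hinv, Matrix.mul_apply, Fintype.sum_sum_type,
      Finset.mul_sum]
    exact Finset.sum_comm
  rw [h11, h22, h21, h12, hcard]
  ring
end

section
/- Let n ≥ 1, Z : Fin n → Fin n → Bool, and σ a permutation of the index type I of M_Z. Then the product over all v ∈ I of the entries (M_Z) v (σ v) is nonzero if and only if there exist i, j ∈ Fin n with Z i j = true such that σ is the 4-cycle sending s ↦ ℓ_i ↦ r_j ↦ t ↦ s and fixing all other elements of I. -/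
/-- The 4-cycle sending `s ↦ ℓ_i ↦ r_j ↦ t ↦ s` and fixing all other indices. -/
def fourCycle {n : ℕ} (i j : Fin n) : Equiv.Perm (Idx n) :=
  Equiv.swap (sV n) (tV n) * Equiv.swap (sV n) (rV j) * Equiv.swap (sV n) (lV i)

/-!
The nonzero entries of `M_Z` are the arcs of a digraph in which `t → s` and `s → ℓ_i` are the
only arcs out of `t` and `s`, while every `ℓ_i` and `r_j` carries a loop and otherwise has arcs
only to the `r_j` and to `t` respectively. A permutation using only arcs must therefore send
`t ↦ s ↦ ℓ_i`; as `ℓ_i` is already hit, it cannot be fixed and goes to some `r_j`, which in turn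
must go to `t`. Injectivity then forces every other vertex onto its loop.
-/

namespace Idx

variable {n : ℕ}

@[elab_as_elim]
theorem cases {motive : Idx n → Prop} (s : motive (sV n)) (t : motive (tV n))
    (l : ∀ i, motive (lV i)) (r : ∀ j, motive (rV j)) (v : Idx n) : motive v := by
  rcases v with ⟨⟩ | ⟨⟨⟩⟩ | i | j
  exacts [s, t, l i, r j]

@[simp] theorem lV_inj {i i' : Fin n} : lV i = lV i' ↔ i = i' := by simp [lV]
@[simp] theorem rV_inj {j j' : Fin n} : rV j = rV j' ↔ j = j' := by simp [rV]
@[simp] theorem lV_ne_sV (i : Fin n) : lV i ≠ sV n := by simp [lV, sV]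
@[simp] theorem rV_ne_lV (i j : Fin n) : rV j ≠ lV i := by simp [lV, rV]
@[simp] theorem sV_ne_tV : sV n ≠ tV n := by simp [sV, tV]
@[simp] theorem tV_ne_sV : tV n ≠ sV n := sV_ne_tV.symm
@[simp] theorem lV_ne_tV (i : Fin n) : lV i ≠ tV n := by simp [lV, tV]
@[simp] theorem rV_ne_tV (j : Fin n) : rV j ≠ tV n := by simp [rV, tV]
@[simp] theorem rV_ne_sV (j : Fin n) : rV j ≠ sV n := by simp [rV, sV]
@[simp] theorem lV_ne_rV (i j : Fin n) : lV i ≠ rV j := (rV_ne_lV i j).symm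
@[simp] theorem tV_ne_lV (i : Fin n) : tV n ≠ lV i := (lV_ne_tV i).symm
@[simp] theorem tV_ne_rV (j : Fin n) : tV n ≠ rV j := (rV_ne_tV j).symm

end Idx

section Entries

variable {n : ℕ} (Z : Fin n → Fin n → Bool) (w : Idx n)

theorem MZ_sV_ne_zero_iff : MZ n Z (sV n) w ≠ 0 ↔ ∃ i, w = lV i := by
  rcases w with _ | _ | _ | _ <;> simp [MZ, sV, lV]

theorem MZ_tV_ne_zero_iff : MZ n Z (tV n) w ≠ 0 ↔ w = sV n := by
  rcases w with _ | _ | _ | _ <;> simp [MZ, sV, tV]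

theorem MZ_lV_ne_zero_iff (i : Fin n) :
    MZ n Z (lV i) w ≠ 0 ↔ w = lV i ∨ ∃ j, Z i j = true ∧ w = rV j := by
  rcases w with _ | _ | _ | _ <;> simp [MZ, lV, rV, eq_comm (a := i)]

theorem MZ_rV_ne_zero_iff (j : Fin n) : MZ n Z (rV j) w ≠ 0 ↔ w = rV j ∨ w = tV n := by
  rcases w with _ | _ | _ | _ <;> simp [MZ, rV, tV, eq_comm (a := j)]

end Entries

section FourCycle

variable {n : ℕ} (i j : Fin n)

@[simp] theorem fourCycle_sV : fourCycle i j (sV n) = lV i := by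
  simp [fourCycle, Equiv.swap_apply_of_ne_of_ne]

@[simp] theorem fourCycle_lV_self : fourCycle i j (lV i) = rV j := by
  simp [fourCycle, Equiv.swap_apply_of_ne_of_ne]

@[simp] theorem fourCycle_rV_self : fourCycle i j (rV j) = tV n := by
  simp [fourCycle, Equiv.swap_apply_of_ne_of_ne]

@[simp] theorem fourCycle_tV : fourCycle i j (tV n) = sV n := by
  simp [fourCycle, Equiv.swap_apply_of_ne_of_ne]

theorem fourCycle_lV_of_ne {i' : Fin n} (h : i' ≠ i) : fourCycle i j (lV i') = lV i' := by
  simp [fourCycle, Equiv.swap_apply_of_ne_of_ne, h]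

theorem fourCycle_rV_of_ne {j' : Fin n} (h : j' ≠ j) : fourCycle i j (rV j') = rV j' := by
  simp [fourCycle, Equiv.swap_apply_of_ne_of_ne, h]

end FourCycle

section Support

variable {n : ℕ} {Z : Fin n → Fin n → Bool}

theorem eq_fourCycle_of {i j : Fin n} {σ : Equiv.Perm (Idx n)} (hs : σ (sV n) = lV i)
    (hl : σ (lV i) = rV j) (hr : σ (rV j) = tV n) (ht : σ (tV n) = sV n)
    (hl' : ∀ i' ≠ i, σ (lV i') = lV i') (hr' : ∀ j' ≠ j, σ (rV j') = rV j') :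
    σ = fourCycle i j := by
  ext1 v
  induction v using Idx.cases with
  | s => simpa using hs
  | t => simpa using ht
  | l i' =>
    by_cases h : i' = i
    · subst h; simpa using hl
    · rw [hl' i' h, fourCycle_lV_of_ne i j h]
  | r j' =>
    by_cases h : j' = j
    · subst h; simpa using hr
    · rw [hr' j' h, fourCycle_rV_of_ne i j h]

theorem MZ_apply_fourCycle_ne_zero {i j : Fin n} (hZ : Z i j = true) (v : Idx n) :
    MZ n Z v (fourCycle i j v) ≠ 0 := by
  induction v using Idx.cases with
  | s => exact (MZ_sV_ne_zero_iff Z _).2 ⟨i, fourCycle_sV i j⟩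
  | t => exact (MZ_tV_ne_zero_iff Z _).2 (fourCycle_tV i j)
  | l i' =>
    refine (MZ_lV_ne_zero_iff Z _ i').2 ?_
    by_cases h : i' = i
    · subst h; exact Or.inr ⟨j, hZ, fourCycle_lV_self i' j⟩
    · exact Or.inl (fourCycle_lV_of_ne i j h)
  | r j' =>
    refine (MZ_rV_ne_zero_iff Z _ j').2 ?_
    by_cases h : j' = j
    · subst h; exact Or.inr (fourCycle_rV_self i j')
    · exact Or.inl (fourCycle_rV_of_ne i j h)

theorem exists_eq_fourCycle_of_forall_MZ_ne_zero {σ : Equiv.Perm (Idx n)}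
    (h : ∀ v, MZ n Z v (σ v) ≠ 0) : ∃ i j, Z i j = true ∧ σ = fourCycle i j := by
  have ht : σ (tV n) = sV n := (MZ_tV_ne_zero_iff Z _).1 (h _)
  obtain ⟨i, hs⟩ := (MZ_sV_ne_zero_iff Z _).1 (h (sV n))
  obtain ⟨j, hZ, hl⟩ : ∃ j, Z i j = true ∧ σ (lV i) = rV j :=
    ((MZ_lV_ne_zero_iff Z _ i).1 (h _)).resolve_left fun hfix =>
      Idx.lV_ne_sV i (σ.injective (hfix.trans hs.symm))
  have hr : σ (rV j) = tV n :=
    ((MZ_rV_ne_zero_iff Z _ j).1 (h _)).resolve_left fun hfix =>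
      Idx.rV_ne_lV i j (σ.injective (hfix.trans hl.symm))
  have hr' : ∀ j' ≠ j, σ (rV j') = rV j' := fun j' hj' =>
    ((MZ_rV_ne_zero_iff Z _ j').1 (h _)).resolve_right fun hto =>
      hj' (Idx.rV_inj.1 (σ.injective (hto.trans hr.symm)))
  have hl' : ∀ i' ≠ i, σ (lV i') = lV i' := by
    intro i' hi'
    refine ((MZ_lV_ne_zero_iff Z _ i').1 (h _)).resolve_right ?_
    rintro ⟨j', -, hj'⟩
    by_cases hjj : j' = j
    · subst hjj
      exact hi' (Idx.lV_inj.1 (σ.injective (hj'.trans hl.symm)))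
    · exact Idx.lV_ne_rV i' j' (σ.injective (hj'.trans (hr' j' hjj).symm))
  exact ⟨i, j, hZ, eq_fourCycle_of hs hl hr ht hl' hr'⟩

end Support

theorem prod_MZ_ne_zero_iff_general (n : ℕ) (Z : Fin n → Fin n → Bool)
    (σ : Equiv.Perm (Idx n)) :
    (∏ v : Idx n, MZ n Z v (σ v)) ≠ 0 ↔
      ∃ i j : Fin n, Z i j = true ∧ σ = fourCycle i j := by
  rw [Finset.prod_ne_zero_iff]
  constructor
  · exact fun h => exists_eq_fourCycle_of_forall_MZ_ne_zero fun v => h v (Finset.mem_univ v)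
  · rintro ⟨i, j, hZ, rfl⟩ v -
    exact MZ_apply_fourCycle_ne_zero hZ v

theorem prod_MZ_ne_zero_iff (n : ℕ) (hn : 1 ≤ n) (Z : Fin n → Fin n → Bool)
    (σ : Equiv.Perm (Idx n)) :
    (∏ v : Idx n, MZ n Z v (σ v)) ≠ 0 ↔
      ∃ i j : Fin n, Z i j = true ∧ σ = fourCycle i j :=
  prod_MZ_ne_zero_iff_general n Z σ
end

section
/- Let n ≥ 3. The fixed-edge graph G₀ (the graph G(z) for z identically false) is connected and every vertex of G₀ has even degree. -/
/-!
Without the optional edges, `G₀` is the cycle `m_1 ⋯ m_n m_1` together with the two paths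
`ℓ_0 ⋯ ℓ_{n+1}` and `r_0 ⋯ r_{n+1}`, each attached by its first vertex to `m_1` and by its last
to `m_n`. Hence `G₀` is connected, and every vertex has degree 2 except `m_1` and `m_n`, which
have degree 4.
-/
/-- The vertex `ℓ_i`, `0 ≤ i ≤ n+1`. -/
def vL {n : ℕ} (i : Fin (n + 2)) : Fin (n + 2) ⊕ Fin (n + 2) ⊕ Fin n := Sum.inl i

/-- The vertex `r_i`, `0 ≤ i ≤ n+1`. -/
def vR {n : ℕ} (i : Fin (n + 2)) : Fin (n + 2) ⊕ Fin (n + 2) ⊕ Fin n :=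
  Sum.inr (Sum.inl i)

/-- The vertex `m_{j+1}`, i.e. `j : Fin n` represents the middle vertices `m_1, …, m_n`. -/
def vM {n : ℕ} (j : Fin n) : Fin (n + 2) ⊕ Fin (n + 2) ⊕ Fin n :=
  Sum.inr (Sum.inr j)

/-- The graph `G(z)` on the `3n+4` vertices `ℓ_0, …, ℓ_{n+1}, r_0, …, r_{n+1}, m_1, …, m_n`.
Fixed edges: `{ℓ_i, ℓ_{i+1}}` and `{r_i, r_{i+1}}` for `0 ≤ i ≤ n`; `{m_j, m_{j+1}}` for
`1 ≤ j ≤ n-1`; and the five edges `{ℓ_0, m_1}`, `{r_0, m_1}`, `{ℓ_{n+1}, m_n}`,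
`{r_{n+1}, m_n}`, `{m_1, m_n}`.  In addition, for every `(i, j)` with `z i j = true`
(where `i, j : Fin n` represent indices `1, …, n`) the two edges `{ℓ_{i+1}, m_{j+1}}` and
`{r_{i+1}, m_{j+1}}`. -/
def GE (n : ℕ) (z : Fin n → Fin n → Bool) :
    SimpleGraph (Fin (n + 2) ⊕ Fin (n + 2) ⊕ Fin n) :=
  SimpleGraph.fromEdgeSet { e |
    (∃ i : Fin (n + 1), e = s(vL i.castSucc, vL i.succ)) ∨
    (∃ i : Fin (n + 1), e = s(vR i.castSucc, vR i.succ)) ∨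
    (∃ j : Fin n, ∃ h : j.val + 1 < n, e = s(vM j, vM ⟨j.val + 1, h⟩)) ∨
    (∃ h : 0 < n,
      e = s(vL 0, vM ⟨0, h⟩) ∨ e = s(vR 0, vM ⟨0, h⟩) ∨
      e = s(vL (Fin.last (n + 1)), vM ⟨n - 1, by omega⟩) ∨
      e = s(vR (Fin.last (n + 1)), vM ⟨n - 1, by omega⟩) ∨
      e = s(vM ⟨0, h⟩, vM ⟨n - 1, by omega⟩)) ∨
    (∃ i j : Fin n, z i j = true ∧
      (e = s(vL ⟨i.val + 1, by have := i.isLt; omega⟩, vM j) ∨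
       e = s(vR ⟨i.val + 1, by have := i.isLt; omega⟩, vM j))) }

open SimpleGraph Sum

lemma SimpleGraph.degree_eq_card_of_forall_adj_iff {V : Type*} {G : SimpleGraph V} {v : V}
    [Fintype (G.neighborSet v)] (s : Finset V) (h : ∀ w, G.Adj v w ↔ w ∈ s) :
    G.degree v = s.card := by
  rw [← card_neighborFinset_eq_degree]
  congr
  ext w
  rw [mem_neighborFinset, h]

local notation "G₀" n:max => GE n fun _ _ => false

-- Vertices appear unfolded: `inl i = ℓ_i`, `inr (inl i) = r_i`, `inr (inr j) = m_{j+1}`.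

namespace GE

variable {n : ℕ}

@[simp] lemma fixed_adj_inl_inl (i j : Fin (n + 2)) :
    (G₀ n).Adj (inl i) (inl j) ↔ i.val + 1 = j.val ∨ j.val + 1 = i.val := by
  simp [GE, vL, vR, vM, and_or_left, exists_or, Fin.exists_iff, Fin.ext_iff, -Fin.val_eq_zero_iff]
  omega

@[simp] lemma fixed_adj_inr_inl_inr_inl (i j : Fin (n + 2)) :
    (G₀ n).Adj (inr (inl i)) (inr (inl j)) ↔ i.val + 1 = j.val ∨ j.val + 1 = i.val := by
  simp [GE, vL, vR, vM, and_or_left, exists_or, Fin.exists_iff, Fin.ext_iff, -Fin.val_eq_zero_iff]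
  omega

@[simp] lemma fixed_adj_inr_inr_inr_inr (j k : Fin n) :
    (G₀ n).Adj (inr (inr j)) (inr (inr k)) ↔
      (j.val + 1 = k.val ∨ k.val + 1 = j.val) ∨
      (j.val = 0 ∧ k.val = n - 1 ∧ 2 ≤ n) ∨ (k.val = 0 ∧ j.val = n - 1 ∧ 2 ≤ n) := by
  simp [GE, vL, vR, vM, and_or_left, exists_or, Fin.exists_iff, Fin.ext_iff, -Fin.val_eq_zero_iff]
  omega

@[simp] lemma fixed_not_adj_inl_inr_inl (i j : Fin (n + 2)) :
    ¬ (G₀ n).Adj (inl i) (inr (inl j)) := by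
  simp [GE, vL, vR, vM]

@[simp] lemma fixed_not_adj_inr_inl_inl (i j : Fin (n + 2)) :
    ¬ (G₀ n).Adj (inr (inl i)) (inl j) :=
  fun h ↦ fixed_not_adj_inl_inr_inl j i h.symm

@[simp] lemma fixed_adj_inl_inr_inr (i : Fin (n + 2)) (j : Fin n) :
    (G₀ n).Adj (inl i) (inr (inr j)) ↔
      (i.val = 0 ∧ j.val = 0) ∨ (i.val = n + 1 ∧ j.val = n - 1) := by
  simp [GE, vL, vR, vM, and_or_left, exists_or, Fin.exists_iff, Fin.ext_iff, -Fin.val_eq_zero_iff]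
  omega

@[simp] lemma fixed_adj_inr_inl_inr_inr (i : Fin (n + 2)) (j : Fin n) :
    (G₀ n).Adj (inr (inl i)) (inr (inr j)) ↔
      (i.val = 0 ∧ j.val = 0) ∨ (i.val = n + 1 ∧ j.val = n - 1) := by
  simp [GE, vL, vR, vM, and_or_left, exists_or, Fin.exists_iff, Fin.ext_iff, -Fin.val_eq_zero_iff]
  omega

@[simp] lemma fixed_adj_inr_inr_inl (j : Fin n) (i : Fin (n + 2)) :
    (G₀ n).Adj (inr (inr j)) (inl i) ↔
      (i.val = 0 ∧ j.val = 0) ∨ (i.val = n + 1 ∧ j.val = n - 1) := by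
  rw [adj_comm, fixed_adj_inl_inr_inr]

@[simp] lemma fixed_adj_inr_inr_inr_inl (j : Fin n) (i : Fin (n + 2)) :
    (G₀ n).Adj (inr (inr j)) (inr (inl i)) ↔
      (i.val = 0 ∧ j.val = 0) ∨ (i.val = n + 1 ∧ j.val = n - 1) := by
  rw [adj_comm, fixed_adj_inr_inl_inr_inr]

lemma fixed_reachable_inl_inl (i j : Fin (n + 2)) : (G₀ n).Reachable (inl i) (inl j) :=
  (pathGraph_preconnected _ i j).map ⟨inl, fun h ↦ by simpa [pathGraph_adj] using h⟩

lemma fixed_reachable_inr_inl_inr_inl (i j : Fin (n + 2)) :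
    (G₀ n).Reachable (inr (inl i)) (inr (inl j)) :=
  (pathGraph_preconnected _ i j).map ⟨inr ∘ inl, fun h ↦ by simpa [pathGraph_adj] using h⟩

lemma fixed_reachable_inr_inr_inr_inr (j k : Fin n) :
    (G₀ n).Reachable (inr (inr j)) (inr (inr k)) :=
  (pathGraph_preconnected _ j k).map ⟨inr ∘ inr, fun h ↦ by simp_all [pathGraph_adj]⟩

lemma fixed_connected (hn : 0 < n) : (G₀ n).Connected := by
  let m₁ : Fin n := ⟨0, hn⟩
  have to_ℓ₀ : (G₀ n).Reachable (inr (inr m₁)) (inl 0) := Adj.reachable (by simp [m₁])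
  have to_r₀ : (G₀ n).Reachable (inr (inr m₁)) (inr (inl 0)) := Adj.reachable (by simp [m₁])
  refine (connected_iff_exists_forall_reachable _).2 ⟨inr (inr m₁), ?_⟩
  rintro (i | i | j)
  · exact to_ℓ₀.trans (fixed_reachable_inl_inl _ _)
  · exact to_r₀.trans (fixed_reachable_inr_inl_inr_inl _ _)
  · exact fixed_reachable_inr_inr_inr_inr _ _

lemma fixed_degree_inl (hn : 0 < n) (i : Fin (n + 2))
    [Fintype ((G₀ n).neighborSet (inl i))] :
    (G₀ n).degree (inl i) = 2 := by
  obtain hi | hi | hi : i.val = 0 ∨ i.val = n + 1 ∨ (0 < i.val ∧ i.val < n + 1) := by omega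
  · rw [degree_eq_card_of_forall_adj_iff {inl 1, inr (inr ⟨0, hn⟩)}, Finset.card_pair (by simp)]
    rintro (j | j | j) <;> simp [Fin.ext_iff, -Fin.val_eq_zero_iff] <;> omega
  · rw [degree_eq_card_of_forall_adj_iff {inl ⟨n, by omega⟩, inr (inr ⟨n - 1, by omega⟩)},
      Finset.card_pair (by simp)]
    rintro (j | j | j) <;> simp [Fin.ext_iff, -Fin.val_eq_zero_iff] <;> omega
  · rw [degree_eq_card_of_forall_adj_iff {inl ⟨i - 1, by omega⟩, inl ⟨i + 1, by omega⟩},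
      Finset.card_pair (by simp [Fin.ext_iff])]
    rintro (j | j | j) <;> simp [Fin.ext_iff, -Fin.val_eq_zero_iff] <;> omega

lemma fixed_degree_inr_inl (hn : 0 < n) (i : Fin (n + 2))
    [Fintype ((G₀ n).neighborSet (inr (inl i)))] :
    (G₀ n).degree (inr (inl i)) = 2 := by
  obtain hi | hi | hi : i.val = 0 ∨ i.val = n + 1 ∨ (0 < i.val ∧ i.val < n + 1) := by omega
  · rw [degree_eq_card_of_forall_adj_iff {inr (inl 1), inr (inr ⟨0, hn⟩)},
      Finset.card_pair (by simp)]
    rintro (j | j | j) <;> simp [Fin.ext_iff, -Fin.val_eq_zero_iff] <;> omega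
  · rw [degree_eq_card_of_forall_adj_iff
        {inr (inl ⟨n, by omega⟩), inr (inr ⟨n - 1, by omega⟩)},
      Finset.card_pair (by simp)]
    rintro (j | j | j) <;> simp [Fin.ext_iff, -Fin.val_eq_zero_iff] <;> omega
  · rw [degree_eq_card_of_forall_adj_iff
        {inr (inl ⟨i - 1, by omega⟩), inr (inl ⟨i + 1, by omega⟩)},
      Finset.card_pair (by simp [Fin.ext_iff])]
    rintro (j | j | j) <;> simp [Fin.ext_iff, -Fin.val_eq_zero_iff] <;> omega

lemma fixed_degree_inr_inr (hn : 3 ≤ n) (j : Fin n)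
    [Fintype ((G₀ n).neighborSet (inr (inr j)))] :
    (G₀ n).degree (inr (inr j)) = if j.val = 0 ∨ j.val = n - 1 then 4 else 2 := by
  obtain hj | hj | hj : j.val = 0 ∨ j.val = n - 1 ∨ (0 < j.val ∧ j.val < n - 1) := by omega
  · rw [if_pos (.inl hj), degree_eq_card_of_forall_adj_iff
      {inl 0, inr (inl 0), inr (inr ⟨1, by omega⟩), inr (inr ⟨n - 1, by omega⟩)}]
    · rw [Finset.card_insert_of_notMem (by simp), Finset.card_insert_of_notMem (by simp),
        Finset.card_pair (by simp [Fin.ext_iff]; omega)]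
    rintro (i | i | k) <;> simp [Fin.ext_iff, -Fin.val_eq_zero_iff] <;> omega
  · rw [if_pos (.inr hj), degree_eq_card_of_forall_adj_iff
      {inl (Fin.last _), inr (inl (Fin.last _)),
        inr (inr ⟨n - 2, by omega⟩), inr (inr ⟨0, by omega⟩)}]
    · rw [Finset.card_insert_of_notMem (by simp), Finset.card_insert_of_notMem (by simp),
        Finset.card_pair (by simp [Fin.ext_iff]; omega)]
    rintro (i | i | k) <;> simp [Fin.ext_iff, -Fin.val_eq_zero_iff] <;> omega
  · rw [if_neg (by omega), degree_eq_card_of_forall_adj_iff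
      {inr (inr ⟨j - 1, by omega⟩), inr (inr ⟨j + 1, by omega⟩)},
      Finset.card_pair (by simp [Fin.ext_iff])]
    rintro (i | i | k) <;> simp [Fin.ext_iff, -Fin.val_eq_zero_iff] <;> omega

end GE

theorem GE_fixed_connected_and_even_degree (n : ℕ) (hn : 3 ≤ n) :
    (GE n fun _ _ => false).Connected ∧
      ∀ v : Fin (n + 2) ⊕ Fin (n + 2) ⊕ Fin n,
        haveI : Fintype ((GE n fun _ _ => false).neighborSet v) := Fintype.ofFinite _
        Even ((GE n fun _ _ => false).degree v) := by
  refine ⟨GE.fixed_connected (by omega), ?_⟩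
  rintro (i | i | j)
  · rw [GE.fixed_degree_inl (by omega)]
    exact even_two
  · rw [GE.fixed_degree_inr_inl (by omega)]
    exact even_two
  · rw [GE.fixed_degree_inr_inr hn]
    split_ifs <;> decide
end

section
/- Let n ≥ 1 and A : Fin n → Fin n → Bool. Consider the matrix over the multivariate polynomial ring MvPolynomial (Fin n × Fin n) ℤ whose (i,j) entry is the variable X (i,j) if A i j = true and 0 otherwise. Then the determinant of this matrix is nonzero (as a polynomial) if and only if there exists a permutation σ of Fin n with A i (σ i) = true for all i (i.e., the bipartite graph with biadjacency matrix A has a perfect matching). -/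
/-!
Expanding the determinant along permutations, the term of `σ` is `± ∏ i, X (i, σ i)` when
`A i (σ i)` holds for every `i`, and `0` otherwise. Distinct permutations give distinct
monomials, so these terms cannot cancel: the determinant vanishes exactly when no permutation
is supported by `A`.
-/

open MvPolynomial Finset Equiv

noncomputable section

variable (R : Type*) [CommRing R] {ι : Type*} [Fintype ι]

def permExponent (σ : Perm ι) : ι × ι →₀ ℕ :=
  ∑ i, Finsupp.single (i, σ i) 1

theorem prod_X_eq_monomial_permExponent (σ : Perm ι) :
    ∏ i, (X (i, σ i) : MvPolynomial (ι × ι) R) = monomial (permExponent σ) 1 := by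
  rw [permExponent, monomial_sum_one]
  rfl

def symbolicMatrix (A : ι → ι → Bool) : Matrix ι ι (MvPolynomial (ι × ι) R) :=
  Matrix.of fun i j => if A i j then X (i, j) else 0

variable [DecidableEq ι]

theorem permExponent_apply (σ : Perm ι) (i a : ι) :
    permExponent σ (i, a) = if σ i = a then 1 else 0 := by
  simp only [permExponent, Finsupp.finsetSum_apply, Finsupp.single_apply, Prod.mk.injEq]
  rw [Fintype.sum_eq_single i fun j hj => by simp [hj]]
  simp

theorem permExponent_injective : Function.Injective (permExponent (ι := ι)) := by
  intro σ τ h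
  ext i
  have hτσ : τ i = σ i := by simpa [permExponent_apply] using congrArg (· (i, σ i)) h
  exact hτσ.symm

theorem det_symbolicMatrix (A : ι → ι → Bool) :
    (symbolicMatrix R A).det = ∑ σ ∈ univ.filter (fun σ : Perm ι => ∀ i, A i (σ i)),
      Perm.sign σ • monomial (permExponent σ) 1 := by
  rw [← Matrix.det_transpose, Matrix.det_apply, sum_filter]
  refine sum_congr rfl fun σ _ => ?_
  split_ifs with hσ
  · simp [symbolicMatrix, hσ, prod_X_eq_monomial_permExponent]
  · obtain ⟨i, hi⟩ := not_forall.1 hσ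
    rw [prod_eq_zero (mem_univ i) (by simp [symbolicMatrix, hi]), smul_zero]

theorem coeff_permExponent_det_symbolicMatrix {A : ι → ι → Bool} {σ : Perm ι}
    (hσ : ∀ i, A i (σ i)) :
    coeff (permExponent σ) (symbolicMatrix R A).det = Perm.sign σ • 1 := by
  simp_rw [det_symbolicMatrix, coeff_sum, coeff_smul, coeff_monomial,
    permExponent_injective.eq_iff]
  simp [hσ]

theorem det_symbolicMatrix_ne_zero_iff [Nontrivial R] (A : ι → ι → Bool) :
    (symbolicMatrix R A).det ≠ 0 ↔ ∃ σ : Perm ι, ∀ i, A i (σ i) := by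
  constructor
  · intro h
    by_contra! hA
    refine h ?_
    rw [det_symbolicMatrix, filter_false_of_mem fun σ _ hσ => ?_, sum_empty]
    obtain ⟨i, hi⟩ := hA σ
    exact hi (hσ i)
  · rintro ⟨σ, hσ⟩ h
    have hcoeff := coeff_permExponent_det_symbolicMatrix R hσ
    rw [h, coeff_zero] at hcoeff
    rcases Int.units_eq_one_or (Perm.sign σ) with hs | hs <;> simp [hs] at hcoeff

end

theorem det_symbolic_ne_zero_iff_perfectMatching_general (n : ℕ)
    (A : Fin n → Fin n → Bool) :
    (Matrix.of fun i j : Fin n =>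
        if A i j then (MvPolynomial.X (i, j) : MvPolynomial (Fin n × Fin n) ℤ)
        else 0).det ≠ 0 ↔
      ∃ σ : Equiv.Perm (Fin n), ∀ i : Fin n, A i (σ i) = true :=
  det_symbolicMatrix_ne_zero_iff ℤ A

theorem det_symbolic_ne_zero_iff_perfectMatching (n : ℕ) (hn : 1 ≤ n)
    (A : Fin n → Fin n → Bool) :
    (Matrix.of fun i j : Fin n =>
        if A i j then (MvPolynomial.X (i, j) : MvPolynomial (Fin n × Fin n) ℤ)
        else 0).det ≠ 0 ↔
      ∃ σ : Equiv.Perm (Fin n), ∀ i : Fin n, A i (σ i) = true :=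
  det_symbolic_ne_zero_iff_perfectMatching_general n A
end
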